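/- arXiv:2010.03327 — 5 statements merged into one kernel-verified Lean document; each statement's English description precedes it below -/
import Mathlib

section
/- Let T be a pruned tree on a non-empty countable set A and let X be the set of infinite branches of T, topologized by the cylinder sets O(s) = {x ∈ X : s is an initial segment of x} for s ∈ T. For a function f : X → ℝ, the following are equivalent: (1) f is a limsup function; (2) there is a sequence g₀, g₁, … of lower semicontinuous functions on X converging pointwise to f; (3) there is a non-increasing sequence g₀ ≥ g₁ ≥ ⋯ of lower semicontinuous functions on X converging pointwise to f. -/
open Filter Topology

/-- The initial segment `(x₀, …, x_{n-1})` of an infinite sequence `x`. -/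
def initSeg {β : Type*} (x : ℕ → β) (n : ℕ) : List β :=
  List.ofFn fun i : Fin n => x i

/-- `T` is a pruned tree on `A`: it contains the empty sequence, is closed under
prefixes, and every element has a proper extension in `T`. -/
def IsPrunedTree {A : Type*} (T : Set (List A)) : Prop :=
  [] ∈ T ∧ (∀ s ∈ T, ∀ t : List A, t <+: s → t ∈ T) ∧ ∀ s ∈ T, ∃ a : A, s ++ [a] ∈ T

/-- The space `X` of infinite branches of the tree `T`, topologized as a subspace of
the product `ℕ → A` (with `A` discrete); this is exactly the cylinder-set topology. -/
abbrev Branches {A : Type*} (T : Set (List A)) : Type _ :=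
  {x : ℕ → A // ∀ n : ℕ, initSeg x n ∈ T}

/-- The cylinder set `O(s)` of all branches with initial segment `s`. -/
def cyl {A : Type*} (T : Set (List A)) (s : List A) : Set (Branches T) :=
  {x | initSeg x.val s.length = s}

/-- `f : X → ℝ` is a limsup function: there is `u` defined on finite sequences with
`f x = limsup_{t → ∞} u (x₀, …, x_t)` for every branch `x` (the limsup being computed
in the extended reals and required to equal the real number `f x`). -/
def IsLimsupFunction {A : Type*} {T : Set (List A)} (f : Branches T → ℝ) : Prop :=
  ∃ u : List A → ℝ, ∀ x : Branches T,
    (f x : EReal) = Filter.limsup (fun t : ℕ => (u (initSeg x.val (t + 1)) : EReal)) Filter.atTop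

/-- `f` is of Baire class 1: a pointwise limit of continuous functions. -/
def BaireClassOne {X : Type*} [TopologicalSpace X] (f : X → ℝ) : Prop :=
  ∃ g : ℕ → X → ℝ, (∀ n, Continuous (g n)) ∧
    ∀ x, Filter.Tendsto (fun n => g n x) Filter.atTop (nhds (f x))

/-- A Cantor set: a subset homeomorphic to the Cantor space `2^ℕ`. -/
def IsCantorSet {X : Type*} [TopologicalSpace X] (C : Set X) : Prop :=
  Nonempty (C ≃ₜ (ℕ → Bool))

/-- A Bernstein set: neither it nor its complement contains a nonempty perfect set. -/
def IsBernsteinSet {X : Type*} [TopologicalSpace X] (B : Set X) : Prop :=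
  ∀ P : Set X, Perfect P → P.Nonempty → ¬ P ⊆ B ∧ ¬ P ⊆ Bᶜ

/-- A co-analytic set: the complement of an analytic set. -/
def IsCoanalytic {X : Type*} [TopologicalSpace X] (s : Set X) : Prop :=
  MeasureTheory.AnalyticSet sᶜ

/-- The sequence of moves produced by Player I's strategy `σ` against the sequence `v`
of moves of Player II: Player I's `n`-th move depends on `(v₀, …, v_{n-1})`. -/
def playI {A M : Type*} (σ : List M → A) (v : ℕ → M) : ℕ → A :=
  fun n => σ (initSeg v n)

/-- Player II has a winning strategy in the game `Γ(f)`: a strategy for Player II assigns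
to each position `(x₀, …, x_t)` of moves of Player I a real number `v_t` (Player II's own
previous moves being determined), and it is winning if for every run, i.e. every branch
`x` that Player I may produce, `f x = limsup_{t → ∞} v_t`. -/
def PlayerIIWinsGamma {A : Type*} {T : Set (List A)} (f : Branches T → ℝ) : Prop :=
  ∃ τ : List A → ℝ, ∀ x : Branches T,
    (f x : EReal) = Filter.limsup (fun t : ℕ => (τ (initSeg x.val (t + 1)) : EReal)) Filter.atTop

/-- Player I has a winning strategy in the game `Γ_R(f)` where Player II's moves are
restricted to `R`: a strategy for Player I assigns to each position `(v₀, …, v_{n-1})` of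
moves of Player II a point of `A`, and it is winning if against every sequence of moves
of Player II in `R` the moves of Player I are legal (all initial segments lie in `T`) and
the resulting branch `x` satisfies `f x ≠ limsup_{t → ∞} v_t`. -/
def PlayerIWinsGammaR {A : Type*} {T : Set (List A)} (R : Set ℝ) (f : Branches T → ℝ) :
    Prop :=
  ∃ σ : List ℝ → A, ∀ v : ℕ → ℝ, (∀ t, v t ∈ R) →
    ∃ h : ∀ n : ℕ, initSeg (playI σ v) n ∈ T,
      (f ⟨playI σ v, h⟩ : EReal) ≠ Filter.limsup (fun t : ℕ => (v t : EReal)) Filter.atTop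

/-- Player I has a winning strategy in the game `Γ(f)`. -/
def PlayerIWinsGamma {A : Type*} {T : Set (List A)} (f : Branches T → ℝ) : Prop :=
  ∃ σ : List ℝ → A, ∀ v : ℕ → ℝ,
    ∃ h : ∀ n : ℕ, initSeg (playI σ v) n ∈ T,
      (f ⟨playI σ v, h⟩ : EReal) ≠ Filter.limsup (fun t : ℕ => (v t : EReal)) Filter.atTop

/-- Player II has a winning strategy in the game `Γ'(f)`, in which Player II's moves are
pairs `(v_t, w_t)` of reals and Player II wins a run iff
`f x = limsup_{t → ∞} v_t = liminf_{t → ∞} w_t`. -/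
def PlayerIIWinsGamma' {A : Type*} {T : Set (List A)} (f : Branches T → ℝ) : Prop :=
  ∃ τ : List A → ℝ × ℝ, ∀ x : Branches T,
    (f x : EReal) =
      Filter.limsup (fun t : ℕ => ((τ (initSeg x.val (t + 1))).1 : EReal)) Filter.atTop ∧
    (f x : EReal) =
      Filter.liminf (fun t : ℕ => ((τ (initSeg x.val (t + 1))).2 : EReal)) Filter.atTop

/-- Player I has a winning strategy in the game `Γ'(f)`. -/
def PlayerIWinsGamma' {A : Type*} {T : Set (List A)} (f : Branches T → ℝ) : Prop :=
  ∃ σ : List (ℝ × ℝ) → A, ∀ v : ℕ → ℝ × ℝ,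
    ∃ h : ∀ n : ℕ, initSeg (playI σ v) n ∈ T,
      ¬ ((f ⟨playI σ v, h⟩ : EReal) =
            Filter.limsup (fun t : ℕ => ((v t).1 : EReal)) Filter.atTop ∧
         (f ⟨playI σ v, h⟩ : EReal) =
            Filter.liminf (fun t : ℕ => ((v t).2 : EReal)) Filter.atTop)


section Aux

set_option linter.unusedSectionVars false

variable {A : Type*} [TopologicalSpace A] [DiscreteTopology A] {T : Set (List A)}

theorem initSeg_length {x : ℕ → A} (n : ℕ) : (initSeg x n).length = n := by
  simp [initSeg]

theorem initSeg_getElem {x : ℕ → A} {n i : ℕ} (h : i < (initSeg x n).length) :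
    (initSeg x n)[i] = x i := by
  simp [initSeg]

theorem initSeg_take {x : ℕ → A} {n m : ℕ} (h : n ≤ m) :
    (initSeg x m).take n = initSeg x n := by
  apply List.ext_getElem
  · simp [initSeg, h]
  · intro i h1 h2
    simp only [List.getElem_take, initSeg_getElem]

theorem initSeg_eq_iff {x y : ℕ → A} {m : ℕ} :
    initSeg x m = initSeg y m ↔ ∀ i < m, x i = y i := by
  constructor
  · intro h i hi
    have h1 : i < (initSeg x m).length := by simpa [initSeg_length] using hi
    have h2 : i < (initSeg y m).length := by simpa [initSeg_length] using hi
    calc x i = (initSeg x m)[i]'h1 := (initSeg_getElem h1).symm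
      _ = (initSeg y m)[i]'h2 := List.getElem_of_eq h h1
      _ = y i := initSeg_getElem h2
  · intro h
    apply List.ext_getElem (by simp [initSeg_length])
    intro i h1 h2
    rw [initSeg_getElem h1, initSeg_getElem h2]
    exact h i (by simpa [initSeg_length] using h1)

/-- cylinders are open -/
theorem isOpen_cyl_eq (x : Branches T) (m : ℕ) :
    IsOpen {y : Branches T | initSeg y.val m = initSeg x.val m} := by
  have hF : Continuous (fun y : Branches T => (fun i : Fin m => y.val i)) :=
    continuous_pi fun i => (continuous_apply (i : ℕ)).comp continuous_subtype_val
  have : {y : Branches T | initSeg y.val m = initSeg x.val m} =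
      (fun y : Branches T => (fun i : Fin m => y.val i)) ⁻¹'
        {v : Fin m → A | List.ofFn v = initSeg x.val m} := rfl
  rw [this]
  exact (isOpen_discrete _).preimage hF

/-- every neighborhood contains a cylinder -/
theorem exists_cyl_subset {x : Branches T} {V : Set (Branches T)} (hV : V ∈ 𝓝 x) :
    ∃ m : ℕ, {y : Branches T | initSeg y.val m = initSeg x.val m} ⊆ V := by
  obtain ⟨U, hUV, hU, hxU⟩ := mem_nhds_iff.mp hV
  obtain ⟨W, hW, hUW⟩ := isOpen_induced_iff.mp hU
  obtain ⟨I, u, hu, hsub⟩ := isOpen_pi_iff.mp hW x.val (by rw [← hUW] at hxU; exact hxU)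
  refine ⟨I.sup id + 1, fun y hy => ?_⟩
  have hy' : ∀ i < I.sup id + 1, y.val i = x.val i := initSeg_eq_iff.mp hy
  apply hUV
  rw [← hUW]
  apply hsub
  intro i hi
  have : y.val i = x.val i := hy' i (Nat.lt_succ_of_le (Finset.le_sup (f := id) hi))
  rw [this]
  exact (hu i hi).2

end Aux

section Aux2

set_option linter.unusedSectionVars false

variable {A : Type*} [TopologicalSpace A] [DiscreteTopology A] {T : Set (List A)}
  {f : Branches T → ℝ}

theorem aux_C1_to_C3 (h : IsLimsupFunction f) :
    ∃ g : ℕ → Branches T → ℝ, (∀ n, LowerSemicontinuous (g n)) ∧ Antitone g ∧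
      ∀ x, Filter.Tendsto (fun n => g n x) Filter.atTop (nhds (f x)) := by
  obtain ⟨u, hu⟩ := h
  set v : Branches T → ℕ → EReal := fun x t => (u (initSeg x.val (t + 1)) : EReal) with hv
  have hls : ∀ x, (f x : EReal) = ⨅ n, ⨆ i, v x (i + n) := by
    intro x
    rw [hu x, Filter.limsup_eq_iInf_iSup_of_nat']
  set G : ℕ → Branches T → EReal := fun n x => ⨆ i, v x (i + n) with hG
  have hB : ∀ x, ∃ B : ℝ, ∀ t, v x t ≤ (B : EReal) := by
    intro x
    have hlt : Filter.limsup (v x) Filter.atTop < ((f x + 1 : ℝ) : EReal) := by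
      rw [← hu x]
      exact_mod_cast EReal.coe_lt_coe_iff.mpr (lt_add_one (f x))
    obtain ⟨N, hN⟩ := Filter.eventually_atTop.mp (Filter.eventually_lt_of_limsup_lt hlt)
    refine ⟨max (((Finset.range (N + 1)).sup' (by simp) fun i => u (initSeg x.val (i + 1)))) (f x + 1),
      fun t => ?_⟩
    rcases le_or_gt N t with ht | ht
    · exact le_trans (le_of_lt (hN t ht)) (by exact_mod_cast le_max_right _ _)
    · have : u (initSeg x.val (t + 1)) ≤
          ((Finset.range (N + 1)).sup' (by simp) fun i => u (initSeg x.val (i + 1))) :=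
        Finset.le_sup' (fun i => u (initSeg x.val (i + 1)))
          (Finset.mem_range.mpr (show t < N + 1 by omega))
      calc v x t ≤ (((Finset.range (N + 1)).sup' (by simp) fun i => u (initSeg x.val (i + 1)) : ℝ) : EReal) := by
            simp only [hv]
            exact_mod_cast this
        _ ≤ _ := by exact_mod_cast le_max_left _ _
  have hGtop : ∀ n x, G n x ≠ ⊤ := by
    intro n x
    obtain ⟨B, hB⟩ := hB x
    exact ne_top_of_le_ne_top (EReal.coe_ne_top B) (iSup_le fun i => hB _)
  have hGbot : ∀ n x, G n x ≠ ⊥ := by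
    intro n x
    exact ne_bot_of_le_ne_bot (EReal.coe_ne_bot (u (initSeg x.val (0 + n + 1))))
      (le_iSup (fun i => v x (i + n)) 0)
  have hcoeG : ∀ n x, ((G n x).toReal : EReal) = G n x := fun n x =>
    EReal.coe_toReal (hGtop n x) (hGbot n x)
  have hfG : ∀ n x, (f x : EReal) ≤ G n x := by
    intro n x
    rw [hls x]
    exact iInf_le _ n
  refine ⟨fun n x => (G n x).toReal, ?_, ?_, ?_⟩
  · intro n x y hy
    have hy' : (y : EReal) < G n x := by
      rw [← hcoeG n x]
      exact_mod_cast hy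
    obtain ⟨i, hi⟩ := lt_iSup_iff.mp hy'
    have hopen := isOpen_cyl_eq x (i + n + 1)
    filter_upwards [hopen.mem_nhds (by simp)] with z hz
    have hvz : v z (i + n) = v x (i + n) := by
      simp only [hv]
      rw [hz]
    have : (y : EReal) < G n z := lt_of_lt_of_le (by rw [← hvz] at hi; exact hi)
      (le_iSup (fun i => v z (i + n)) i)
    rw [← hcoeG n z] at this
    exact_mod_cast this
  · apply antitone_nat_of_succ_le
    intro n x
    apply EReal.toReal_le_toReal _ (hGbot (n + 1) x) (hGtop n x)
    apply iSup_le
    intro i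
    exact le_iSup_of_le (i + 1) (by rw [show i + 1 + n = i + (n + 1) by omega])
  · intro x
    have hanti : Antitone fun n => (G n x).toReal := by
      apply antitone_nat_of_succ_le
      intro n
      apply EReal.toReal_le_toReal _ (hGbot (n + 1) x) (hGtop n x)
      exact iSup_le fun i => le_iSup_of_le (i + 1) (by rw [show i + 1 + n = i + (n + 1) by omega])
    have hfg : ∀ n, f x ≤ (G n x).toReal := by
      intro n
      have := hfG n x
      rw [← hcoeG n x] at this
      exact_mod_cast this
    have hbdd : BddBelow (Set.range fun n => (G n x).toReal) :=
      ⟨f x, by rintro b ⟨n, rfl⟩; exact hfg n⟩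
    have htend := tendsto_atTop_ciInf hanti hbdd
    have : (⨅ n, (G n x).toReal) = f x := by
      refine le_antisymm ?_ (le_ciInf hfg)
      refine le_of_forall_pos_le_add ?_
      intro ε hε
      have hlt : (⨅ n, G n x) < ((f x + ε : ℝ) : EReal) := by
        rw [← hls x]
        exact_mod_cast EReal.coe_lt_coe_iff.mpr (by linarith)
      obtain ⟨n, hn⟩ := iInf_lt_iff.mp hlt
      have : (G n x).toReal ≤ f x + ε := by
        rw [← hcoeG n x] at hn
        exact_mod_cast le_of_lt hn
      exact le_trans (ciInf_le hbdd n) this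
    rwa [this] at htend

theorem aux_C2_to_C3
    (g : ℕ → Branches T → ℝ) (hg1 : ∀ n, LowerSemicontinuous (g n))
    (hg3 : ∀ x, Filter.Tendsto (fun n => g n x) Filter.atTop (nhds (f x))) :
    ∃ g : ℕ → Branches T → ℝ, (∀ n, LowerSemicontinuous (g n)) ∧ Antitone g ∧
      ∀ x, Filter.Tendsto (fun n => g n x) Filter.atTop (nhds (f x)) := by
  have hbdd : ∀ x n, BddAbove (Set.range fun k => g (n + k) x) := by
    intro x n
    apply BddAbove.mono _ ((hg3 x).bddAbove_range)
    rintro b ⟨k, rfl⟩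
    exact ⟨n + k, rfl⟩
  refine ⟨fun n x => sSup (Set.range fun k => g (n + k) x), ?_, ?_, ?_⟩
  · intro n x y hy
    obtain ⟨b, ⟨k, rfl⟩, hk⟩ := exists_lt_of_lt_csSup (Set.range_nonempty _) hy
    filter_upwards [hg1 (n + k) x y hk] with z hz
    exact lt_of_lt_of_le hz (le_csSup (hbdd z n) ⟨k, rfl⟩)
  · apply antitone_nat_of_succ_le
    intro n x
    apply csSup_le_csSup (hbdd x n) (Set.range_nonempty _)
    rintro b ⟨k, rfl⟩
    refine ⟨k + 1, ?_⟩
    show g (n + (k + 1)) x = g (n + 1 + k) x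
    rw [show n + (k + 1) = n + 1 + k by omega]
  · intro x
    rw [Metric.tendsto_atTop]
    intro ε hε
    obtain ⟨N, hN⟩ := Metric.tendsto_atTop.mp (hg3 x) (ε / 2) (by linarith)
    refine ⟨N, fun n hn => ?_⟩
    have hub : sSup (Set.range fun k => g (n + k) x) ≤ f x + ε / 2 := by
      apply csSup_le (Set.range_nonempty _)
      rintro b ⟨k, rfl⟩
      have := hN (n + k) (by omega)
      rw [Real.dist_eq, abs_sub_lt_iff] at this
      linarith [this.1]
    have hlb : f x - ε / 2 ≤ sSup (Set.range fun k => g (n + k) x) := by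
      have h0 := hN n (by omega)
      rw [Real.dist_eq, abs_sub_lt_iff] at h0
      have : g (n + 0) x ≤ sSup (Set.range fun k => g (n + k) x) :=
        le_csSup (hbdd x n) ⟨0, rfl⟩
      rw [Nat.add_zero] at this
      linarith [h0.2]
    rw [Real.dist_eq, abs_sub_lt_iff]
    constructor <;> linarith

end Aux2

section Main

set_option linter.unusedSectionVars false

variable {A : Type*} [TopologicalSpace A] [DiscreteTopology A] {T : Set (List A)}

/-- `PP g s j q` : the function `g j` is at least `q` on the whole cylinder of `s`. -/
def PP (g : ℕ → Branches T → ℝ) (s : List A) (j : ℕ) (q : ℚ) : Prop :=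
  ∀ y : Branches T, initSeg y.val s.length = s → (q : ℝ) ≤ g j y

open Classical in
/-- activation counter -/
noncomputable def cnt (g : ℕ → Branches T → ℝ) (r : ℕ → ℚ) (s : List A) (i : ℕ) : ℕ → ℕ
  | 0 => 0
  | n + 1 =>
    cnt g r s i n +
      if i ≤ n ∧ ∀ j < i + cnt g r s i n, PP g (s.take n) j (r i) then 1 else 0

/-- index `i` is active at position `s` -/
def ActProp (g : ℕ → Branches T → ℝ) (r : ℕ → ℚ) (s : List A) (i : ℕ) : Prop :=
  i ≤ s.length ∧ ∀ j < i + cnt g r s i s.length, PP g s j (r i)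

open Classical in
/-- the strategy: play the largest active rational -/
noncomputable def uu (g : ℕ → Branches T → ℝ) (r : ℕ → ℚ) (s : List A) : ℝ :=
  if h : ((Finset.range (s.length + 1)).filter (fun i => ActProp g r s i)).Nonempty then
    ((Finset.range (s.length + 1)).filter (fun i => ActProp g r s i)).sup' h fun i => (r i : ℝ)
  else -(s.length : ℝ)

variable {g : ℕ → Branches T → ℝ} {r : ℕ → ℚ}

open Classical in
theorem cnt_succ (s : List A) (i n : ℕ) :
    cnt g r s i (n + 1) =
      cnt g r s i n +
        if i ≤ n ∧ ∀ j < i + cnt g r s i n, PP g (s.take n) j (r i) then 1 else 0 := by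
  simp [cnt]

open Classical in
theorem cnt_congr {s t : List A} (i : ℕ) :
    ∀ n, s.take n = t.take n → cnt g r s i n = cnt g r t i n := by
  intro n
  induction n with
  | zero => intro _; simp [cnt]
  | succ n ih =>
    intro h
    have h' : s.take n = t.take n := by
      have hs : (s.take (n + 1)).take n = s.take n := by
        rw [List.take_take]; congr 1; omega
      have ht : (t.take (n + 1)).take n = t.take n := by
        rw [List.take_take]; congr 1; omega
      rw [← hs, ← ht, h]
    rw [cnt_succ, cnt_succ, ih h', h']

open Classical in
theorem uu_ge {s : List A} {i : ℕ} (h : ActProp g r s i) : (r i : ℝ) ≤ uu g r s := by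
  have hmem : i ∈ (Finset.range (s.length + 1)).filter (fun i => ActProp g r s i) := by
    rw [Finset.mem_filter, Finset.mem_range]
    exact ⟨by have := h.1; omega, h⟩
  rw [uu, dif_pos ⟨i, hmem⟩]
  exact Finset.le_sup' (fun i => ((r i : ℝ))) hmem

open Classical in
theorem uu_lt {s : List A} {c : ℝ} (hall : ∀ i, ActProp g r s i → (r i : ℝ) < c)
    (hlen : -(s.length : ℝ) < c) : uu g r s < c := by
  classical
  rw [uu]
  split_ifs with h
  · rw [Finset.sup'_lt_iff]
    intro i hi
    exact hall i (Finset.mem_filter.mp hi).2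
  · exact hlen

end Main

section Main2

set_option linter.unusedSectionVars false
set_option maxHeartbeats 1000000

variable {A : Type*} [TopologicalSpace A] [DiscreteTopology A] {T : Set (List A)}

theorem aux_C3_to_C1 {f : Branches T → ℝ} (g : ℕ → Branches T → ℝ)
    (hg1 : ∀ n, LowerSemicontinuous (g n)) (hg2 : Antitone g)
    (hg3 : ∀ x, Filter.Tendsto (fun n => g n x) Filter.atTop (nhds (f x))) :
    IsLimsupFunction f := by
  classical
  obtain ⟨r, hr⟩ := exists_surjective_nat ℚ
  refine ⟨uu g r, fun x => ?_⟩
  set σ : ℕ → List A := fun n => initSeg x.val n with hσ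
  have hσlen : ∀ n, (σ n).length = n := fun n => initSeg_length n
  have hσtake : ∀ {n m : ℕ}, n ≤ m → (σ m).take n = σ n := fun {n m} h => initSeg_take h
  have hK : ∀ (i n m : ℕ), n ≤ m → cnt g r (σ m) i n = cnt g r (σ n) i n := by
    intro i n m h
    exact cnt_congr i n (by rw [hσtake h, hσtake (le_refl n)])
  set Kf : ℕ → ℕ → ℕ := fun i n => cnt g r (σ n) i n with hKf
  have hAiff : ∀ n i, ActProp g r (σ n) i ↔
      (i ≤ n ∧ ∀ j < i + Kf i n, PP g (σ n) j (r i)) := by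
    intro n i
    unfold ActProp
    rw [hσlen n]
  have hKrec : ∀ i n, Kf i (n + 1) = Kf i n + if ActProp g r (σ n) i then 1 else 0 := by
    intro i n
    show cnt g r (σ (n + 1)) i (n + 1) = _
    rw [cnt_succ, hK i n (n + 1) (by omega), hσtake (show n ≤ n + 1 by omega)]
    congr 1
    refine if_congr ?_ rfl rfl
    exact (hAiff n i).symm
  have hKmono : ∀ i, Monotone (Kf i) := by
    intro i
    apply monotone_nat_of_le_succ
    intro n
    rw [hKrec i n]
    exact Nat.le_add_right _ _
  -- stabilization of the cylinder lower bounds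
  have hPstab : ∀ q : ℚ, (q : ℝ) < f x → ∀ B : ℕ, ∃ m₀, ∀ m ≥ m₀, ∀ j < B, PP g (σ m) j q := by
    intro q hq B
    have hsingle : ∀ j, ∃ mj, ∀ m ≥ mj, PP g (σ m) j q := by
      intro j
      have hfle : f x ≤ g j x :=
        le_of_tendsto (hg3 x) (Filter.eventually_atTop.mpr ⟨j, fun k hk => hg2 hk x⟩)
      have hev : ∀ᶠ z in 𝓝 x, (q : ℝ) < g j z := hg1 j x (q : ℝ) (lt_of_lt_of_le hq hfle)
      obtain ⟨m₀, hm₀⟩ := exists_cyl_subset hev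
      refine ⟨m₀, fun m hm y hy => ?_⟩
      rw [hσlen m] at hy
      have hy0 : initSeg y.val m₀ = initSeg x.val m₀ := by
        rw [← initSeg_take (x := y.val) hm, hy, hσtake hm]
      exact le_of_lt (hm₀ hy0)
    choose mf hmf using hsingle
    exact ⟨(Finset.range B).sup mf, fun m hm j hj =>
      hmf j m (le_trans (Finset.le_sup (Finset.mem_range.mpr hj)) hm)⟩
  -- each index below f x is activated infinitely often
  have hfreq : ∀ i, (r i : ℝ) < f x → ∀ M, ∃ m, M ≤ m ∧ ActProp g r (σ m) i := by
    intro i hi M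
    by_contra hcon
    push_neg at hcon
    have hconst : ∀ m, M ≤ m → Kf i m = Kf i M := by
      intro m hm
      induction m, hm using Nat.le_induction with
      | base => rfl
      | succ m hm ih =>
        rw [hKrec i m, if_neg (hcon m hm), ih]; omega
    obtain ⟨m₀, hm₀⟩ := hPstab (r i) hi (i + Kf i M)
    set m := max (max M m₀) i with hm
    have hact : ActProp g r (σ m) i := by
      refine (hAiff m i).mpr ⟨le_max_right _ _, fun j hj => ?_⟩
      rw [hconst m (le_trans (le_max_left M m₀) (le_max_left _ i))] at hj
      exact hm₀ m (le_trans (le_max_right M m₀) (le_max_left _ i)) j hj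
    exact hcon m (le_trans (le_max_left M m₀) (le_max_left _ i)) hact
  -- indices above f x are activated only finitely often
  have hupper : ∀ c : ℚ, f x < c → ∃ M, ∀ m ≥ M, ∀ i, ActProp g r (σ m) i → (r i : ℝ) < c := by
    intro c hc
    obtain ⟨K₀, hK₀⟩ : ∃ K₀, g K₀ x < (c : ℝ) := ((hg3 x).eventually_lt_const hc).exists
    have hkey : ∀ m i, ActProp g r (σ m) i → (c : ℝ) ≤ r i → i + Kf i m ≤ K₀ := by
      intro m i hact hci
      by_contra hKlt
      push_neg at hKlt
      have hPP : PP g (σ m) K₀ (r i) := ((hAiff m i).mp hact).2 K₀ hKlt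
      have hgx : (r i : ℝ) ≤ g K₀ x := hPP x (by rw [hσlen])
      linarith
    have hMi : ∀ i, ∃ Mi, ∀ m ≥ Mi, ¬(ActProp g r (σ m) i ∧ (c : ℝ) ≤ r i) := by
      intro i
      by_contra hcon
      push_neg at hcon
      have hgrow : ∀ V, ∃ m, V ≤ Kf i m := by
        intro V
        induction V with
        | zero => exact ⟨0, by omega⟩
        | succ V ih =>
          obtain ⟨m, hm⟩ := ih
          obtain ⟨m', hm', hact, _⟩ := hcon m
          have h1 : Kf i (m' + 1) = Kf i m' + 1 := by rw [hKrec i m', if_pos hact]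
          have h2 : Kf i m ≤ Kf i m' := hKmono i hm'
          exact ⟨m' + 1, by omega⟩
      obtain ⟨m, hm⟩ := hgrow (K₀ + 1)
      obtain ⟨m', hm', hact, hci⟩ := hcon m
      have h1 := hkey m' i hact hci
      have h2 := hKmono i hm'
      omega
    choose Mf hMf using hMi
    refine ⟨(Finset.range (K₀ + 1)).sup Mf, fun m hm i hact => ?_⟩
    by_contra hge
    push_neg at hge
    have hik : i + Kf i m ≤ K₀ := hkey m i hact hge
    exact hMf i m (le_trans (Finset.le_sup (Finset.mem_range.mpr (by omega))) hm) ⟨hact, hge⟩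
  -- conclusion
  apply le_antisymm
  · by_contra hlt
    push_neg at hlt
    obtain ⟨q, hq1, hq2⟩ := EReal.exists_rat_btwn_of_lt hlt
    obtain ⟨i, hi⟩ := hr q
    have hqf : (r i : ℝ) < f x := by
      rw [hi]
      exact_mod_cast hq2
    have hfr : ∃ᶠ t in Filter.atTop, ((q : ℝ) : EReal) ≤ (uu g r (σ (t + 1)) : EReal) := by
      rw [Filter.frequently_atTop]
      intro t₀
      obtain ⟨m, hm, hact⟩ := hfreq i hqf (t₀ + 1)
      refine ⟨m - 1, by omega, ?_⟩
      rw [show m - 1 + 1 = m by omega]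
      have h1 : (r i : ℝ) ≤ uu g r (σ m) := uu_ge hact
      rw [hi] at h1
      exact_mod_cast h1
    exact absurd (Filter.le_limsup_of_frequently_le' hfr) (not_le.mpr hq1)
  · by_contra hlt
    push_neg at hlt
    obtain ⟨c, hc1, hc2⟩ := EReal.exists_rat_btwn_of_lt hlt
    obtain ⟨M, hM⟩ := hupper c (by exact_mod_cast hc1)
    obtain ⟨N₁, hN₁⟩ := exists_nat_gt (-(c : ℝ))
    have hev : ∀ᶠ t in Filter.atTop, (uu g r (σ (t + 1)) : EReal) ≤ ((c : ℝ) : EReal) := by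
      rw [Filter.eventually_atTop]
      refine ⟨max M N₁, fun t ht => ?_⟩
      have h1 : uu g r (σ (t + 1)) < c := by
        apply uu_lt (fun i hact => hM (t + 1) (by omega) i hact)
        rw [hσlen]
        push_cast
        have : (N₁ : ℝ) ≤ (t : ℝ) + 1 := by
          have : N₁ ≤ t + 1 := by omega
          exact_mod_cast this
        linarith
      exact le_of_lt (by exact_mod_cast h1)
    exact absurd hc2 (not_lt.mpr (Filter.limsup_le_of_le (by isBoundedDefault) hev))

end Main2

/-- Theorem 1 (C1 ↔ C2 ↔ C3): `f` is a limsup function iff it is the pointwise limit of a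
sequence of lower semicontinuous functions, iff it is the pointwise limit of a
non-increasing sequence of lower semicontinuous functions. -/
theorem limsupFunction_iff_pointwiseLimit_lsc
    {A : Type*} [Countable A] [Nonempty A] [TopologicalSpace A] [DiscreteTopology A]
    {T : Set (List A)} (hT : IsPrunedTree T) (f : Branches T → ℝ) :
    (IsLimsupFunction f ↔
      ∃ g : ℕ → Branches T → ℝ, (∀ n, LowerSemicontinuous (g n)) ∧
        ∀ x, Filter.Tendsto (fun n => g n x) Filter.atTop (nhds (f x))) ∧
    (IsLimsupFunction f ↔
      ∃ g : ℕ → Branches T → ℝ, (∀ n, LowerSemicontinuous (g n)) ∧ Antitone g ∧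
        ∀ x, Filter.Tendsto (fun n => g n x) Filter.atTop (nhds (f x))) := by
  constructor
  · constructor
    · intro h
      obtain ⟨g, h1, h2, h3⟩ := aux_C1_to_C3 h
      exact ⟨g, h1, h3⟩
    · rintro ⟨g, h1, h3⟩
      obtain ⟨g', k1, k2, k3⟩ := aux_C2_to_C3 g h1 h3
      exact aux_C3_to_C1 g' k1 k2 k3
  · constructor
    · exact aux_C1_to_C3
    · rintro ⟨g, h1, h2, h3⟩
      exact aux_C3_to_C1 g h1 h2 h3
end

section
/- Let T be a pruned tree on a non-empty countable set A and let X be the set of infinite branches of T with its cylinder-set topology. If f : X → ℝ and g : X → ℝ are limsup functions, then f + g, min(f,g), and max(f,g) are limsup functions. -/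
open Filter Topology

namespace LimsupComb
def sQ (m : ℕ) : ℚ := Denumerable.ofNat ℚ (Nat.unpair (Nat.unpair m).2).1
def sR (m : ℕ) : ℚ := Denumerable.ofNat ℚ (Nat.unpair (Nat.unpair m).2).2
def sK (m : ℕ) : ℕ := (Nat.unpair m).1 + 1
def qcode (q : ℚ) : ℕ := @Encodable.encode ℚ Denumerable.toEncodable q

def bandP (c : ℚ) (k : ℕ) (x : ℝ) : Prop := |x - (c : ℝ)| ≤ 1 / (k : ℝ)

def scond (α β : ℕ → ℝ) (m n : ℕ) (p : ℕ × ℕ) : Prop :=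
  (∃ i, p.1 ≤ i ∧ i ≤ Nat.pair m n ∧ bandP (sQ m) (sK m) (α i)) ∧
  (∃ j, p.2 ≤ j ∧ j ≤ Nat.pair m n ∧ bandP (sR m) (sK m) (β j))

open Classical in
noncomputable def front (α β : ℕ → ℝ) (m : ℕ) : ℕ → ℕ × ℕ
  | 0 => (m, m)
  | n + 1 =>
    let p := front α β m n
    if h : scond α β m n p then
      (h.1.choose + 1, h.2.choose + 1)
    else p

abbrev econd (α β : ℕ → ℝ) (m n : ℕ) : Prop := scond α β m n (front α β m n)

open Classical in
lemma front_succ (α β : ℕ → ℝ) (m n : ℕ) :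
    front α β m (n + 1) =
      if h : econd α β m n then (h.1.choose + 1, h.2.choose + 1)
      else front α β m n := by
  rw [front]

open Classical in
/-- output at the `n`-th slot of stream `m` -/
noncomputable def emitp (φ : ℝ → ℝ → ℝ) (α β : ℕ → ℝ) (m n : ℕ) : ℝ :=
  if h : econd α β m n then
    φ (α (h.1.choose)) (β (h.2.choose))
  else -((Nat.pair m n : ℕ) : ℝ)

/-- the combined output sequence -/
noncomputable def emitv (φ : ℝ → ℝ → ℝ) (α β : ℕ → ℝ) (t : ℕ) : ℝ :=
  emitp φ α β (Nat.unpair t).1 (Nat.unpair t).2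

lemma emitv_pair (φ : ℝ → ℝ → ℝ) (α β : ℕ → ℝ) (m n : ℕ) :
    emitv φ α β (Nat.pair m n) = emitp φ α β m n := by
  rw [emitv, Nat.unpair_pair]

open Classical in
lemma front_fst_mono (α β : ℕ → ℝ) (m : ℕ) : Monotone fun n => (front α β m n).1 := by
  apply monotone_nat_of_le_succ
  intro n
  simp only [front_succ]
  split
  · next h => exact le_trans h.1.choose_spec.1 (Nat.le_succ _)
  · exact le_rfl

open Classical in
lemma front_snd_mono (α β : ℕ → ℝ) (m : ℕ) : Monotone fun n => (front α β m n).2 := by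
  apply monotone_nat_of_le_succ
  intro n
  simp only [front_succ]
  split
  · next h => exact le_trans h.2.choose_spec.1 (Nat.le_succ _)
  · exact le_rfl

lemma m_le_front_fst (α β : ℕ → ℝ) (m n : ℕ) : m ≤ (front α β m n).1 :=
  front_fst_mono α β m (Nat.zero_le n)

lemma m_le_front_snd (α β : ℕ → ℝ) (m n : ℕ) : m ≤ (front α β m n).2 :=
  front_snd_mono α β m (Nat.zero_le n)

lemma mono_stab {c : ℕ → ℕ} (hm : Monotone c) {T : ℕ} (hb : ∀ n, c n < T) :
    ∃ N, ∀ n, N ≤ n → c n = c N := by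
  have hne : (Set.range c).Nonempty := ⟨c 0, ⟨0, rfl⟩⟩
  have hbdd : BddAbove (Set.range c) := ⟨T, by rintro _ ⟨n, rfl⟩; exact (hb n).le⟩
  obtain ⟨N, hN⟩ := Nat.sSup_mem hne hbdd
  refine ⟨N, fun n hn => le_antisymm ?_ (hm hn)⟩
  rw [hN]
  exact le_csSup hbdd ⟨n, rfl⟩

open Classical in
lemma tail_fst (α β : ℕ → ℝ) (m T : ℕ) :
    ∃ N, ∀ n, N ≤ n → ∀ h : econd α β m n, T ≤ h.1.choose := by
  by_cases hc : ∃ n, T ≤ (front α β m n).1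
  · obtain ⟨n₁, h₁⟩ := hc
    exact ⟨n₁, fun n hn h =>
      le_trans (h₁.trans (front_fst_mono α β m hn)) h.1.choose_spec.1⟩
  · push_neg at hc
    obtain ⟨N, hN⟩ := mono_stab (front_fst_mono α β m) hc
    refine ⟨N, fun n hn h => ?_⟩
    exfalso
    have e1 : (front α β m (n + 1)).1 = h.1.choose + 1 := by
      rw [front_succ, dif_pos h]
    have e2 : (front α β m (n + 1)).1 = (front α β m N).1 :=
      hN (n + 1) (le_trans hn (Nat.le_succ n))
    have e3 : (front α β m n).1 = (front α β m N).1 := hN n hn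
    have e4 : (front α β m n).1 ≤ h.1.choose := h.1.choose_spec.1
    omega

open Classical in
lemma tail_snd (α β : ℕ → ℝ) (m T : ℕ) :
    ∃ N, ∀ n, N ≤ n → ∀ h : econd α β m n, T ≤ h.2.choose := by
  by_cases hc : ∃ n, T ≤ (front α β m n).2
  · obtain ⟨n₁, h₁⟩ := hc
    exact ⟨n₁, fun n hn h =>
      le_trans (h₁.trans (front_snd_mono α β m hn)) h.2.choose_spec.1⟩
  · push_neg at hc
    obtain ⟨N, hN⟩ := mono_stab (front_snd_mono α β m) hc
    refine ⟨N, fun n hn h => ?_⟩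
    exfalso
    have e1 : (front α β m (n + 1)).2 = h.2.choose + 1 := by
      rw [front_succ, dif_pos h]
    have e2 : (front α β m (n + 1)).2 = (front α β m N).2 :=
      hN (n + 1) (le_trans hn (Nat.le_succ n))
    have e3 : (front α β m n).2 = (front α β m N).2 := hN n hn
    have e4 : (front α β m n).2 ≤ h.2.choose := h.2.choose_spec.1
    omega


open Classical in
lemma emit_upper (φ : ℝ → ℝ → ℝ)
    (hmono : ∀ a b a' b' : ℝ, a ≤ a' → b ≤ b' → φ a b ≤ φ a' b')
    (hlip : ∀ a b a' b' : ℝ, |φ a b - φ a' b'| ≤ |a - a'| + |b - b'|)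
    (α β : ℕ → ℝ) (f g : ℝ)
    (hαu : ∀ δ : ℝ, 0 < δ → ∀ᶠ i in atTop, α i ≤ f + δ)
    (hβu : ∀ δ : ℝ, 0 < δ → ∀ᶠ j in atTop, β j ≤ g + δ) :
    ∀ ε : ℝ, 0 < ε → ∀ᶠ t in atTop, emitv φ α β t ≤ φ f g + ε := by
  intro ε hε
  have hδ : (0:ℝ) < ε / 2 := by linarith
  obtain ⟨T, hT⟩ := eventually_atTop.mp ((hαu (ε/2) hδ).and (hβu (ε/2) hδ))
  choose N1 hN1 using fun m => tail_fst α β m T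
  choose N2 hN2 using fun m => tail_snd α β m T
  obtain ⟨T₁, hT₁⟩ := exists_nat_ge (-(φ f g + ε))
  set S : ℕ := (Finset.range T).sup (fun m => Nat.pair m (max (N1 m) (N2 m)))
  rw [eventually_atTop]
  refine ⟨max T₁ (S + 1), fun t ht => ?_⟩
  rw [emitv, emitp]
  split
  · next h =>
    set m := (Nat.unpair t).1 with hm
    set n := (Nat.unpair t).2 with hn
    have key : T ≤ h.1.choose ∧ T ≤ h.2.choose := by
      by_cases hmT : T ≤ m
      · exact ⟨le_trans (hmT.trans (m_le_front_fst α β m n)) h.1.choose_spec.1,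
          le_trans (hmT.trans (m_le_front_snd α β m n)) h.2.choose_spec.1⟩
      · push_neg at hmT
        have hnN : max (N1 m) (N2 m) ≤ n := by
          by_contra hcon
          push_neg at hcon
          have h1 : Nat.pair m n < Nat.pair m (max (N1 m) (N2 m)) :=
            Nat.pair_lt_pair_right m hcon
          have h2 : Nat.pair m (max (N1 m) (N2 m)) ≤ S :=
            Finset.le_sup (f := fun m => Nat.pair m (max (N1 m) (N2 m)))
              (Finset.mem_range.mpr hmT)
          have h3 : Nat.pair m n = t := by rw [hm, hn, Nat.pair_unpair]
          omega
        exact ⟨hN1 m n (le_trans (le_max_left _ _) hnN) h,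
          hN2 m n (le_trans (le_max_right _ _) hnN) h⟩
    have hb1 : α (h.1.choose) ≤ f + ε/2 := (hT _ key.1).1
    have hb2 : β (h.2.choose) ≤ g + ε/2 := (hT _ key.2).2
    have step1 : φ (α (h.1.choose)) (β (h.2.choose)) ≤ φ (f + ε/2) (g + ε/2) :=
      hmono _ _ _ _ hb1 hb2
    have step2 := hlip (f + ε/2) (g + ε/2) f g
    have e1 : |f + ε/2 - f| = ε/2 := by rw [add_sub_cancel_left]; exact abs_of_pos hδ
    have e2 : |g + ε/2 - g| = ε/2 := by rw [add_sub_cancel_left]; exact abs_of_pos hδ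
    rw [e1, e2] at step2
    have := (abs_le.mp step2).2
    linarith
  · have h₁ : (T₁ : ℝ) ≤ (t : ℝ) := by
      exact_mod_cast le_trans (le_max_left _ _) ht
    rw [Nat.pair_unpair]
    linarith

open Classical in
set_option maxHeartbeats 2000000 in
lemma emit_lower (φ : ℝ → ℝ → ℝ)
    (hlip : ∀ a b a' b' : ℝ, |φ a b - φ a' b'| ≤ |a - a'| + |b - b'|)
    (α β : ℕ → ℝ) (f g : ℝ)
    (hαu : ∀ δ : ℝ, 0 < δ → ∀ᶠ i in atTop, α i ≤ f + δ)
    (hαl : ∀ δ : ℝ, 0 < δ → ∃ᶠ i in atTop, f - δ ≤ α i)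
    (hβu : ∀ δ : ℝ, 0 < δ → ∀ᶠ j in atTop, β j ≤ g + δ)
    (hβl : ∀ δ : ℝ, 0 < δ → ∃ᶠ j in atTop, g - δ ≤ β j) :
    ∀ ε : ℝ, 0 < ε → ∃ᶠ t in atTop, φ f g - ε ≤ emitv φ α β t := by
  intro ε hε
  -- choose the precision k
  obtain ⟨k₀, hk₀⟩ := exists_nat_ge (8 / ε)
  set k : ℕ := k₀ + 1 with hk
  have hkpos : (0:ℝ) < (k : ℝ) := by positivity
  set c : ℝ := 1 / (k : ℝ) with hc
  have hcpos : 0 < c := by positivity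
  have hkge : 8 / ε ≤ (k : ℝ) := by
    have : (k₀ : ℝ) ≤ (k : ℝ) := by exact_mod_cast Nat.le_succ k₀
    linarith
  have hcle : c ≤ ε / 8 := by
    rw [hc, div_le_div_iff₀ hkpos (by norm_num : (0:ℝ) < 8)]
    have := mul_le_mul_of_nonneg_left hkge (le_of_lt hε)
    rw [mul_div_cancel₀ _ (ne_of_gt hε)] at this
    linarith
  have hc2 : (0:ℝ) < c / 2 := by linarith
  -- rational targets
  obtain ⟨q, hq1, hq2⟩ := exists_rat_btwn (show f - c/2 < f + c/2 by linarith)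
  obtain ⟨r, hr1, hr2⟩ := exists_rat_btwn (show g - c/2 < g + c/2 by linarith)
  have hqf : |(q:ℝ) - f| ≤ c/2 := abs_le.mpr ⟨by linarith, by linarith⟩
  have hrg : |(r:ℝ) - g| ≤ c/2 := abs_le.mpr ⟨by linarith, by linarith⟩
  -- the stream
  set m : ℕ := Nat.pair k₀ (Nat.pair (qcode q) (qcode r)) with hmdef
  have hQ : sQ m = q := by
    simp only [sQ, hmdef, Nat.unpair_pair, qcode]
    exact Denumerable.ofNat_encode q
  have hR : sR m = r := by
    simp only [sR, hmdef, Nat.unpair_pair, qcode]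
    exact Denumerable.ofNat_encode r
  have hK : sK m = k := by
    simp only [sK, hmdef, Nat.unpair_pair, hk]
  -- frequent band hits
  have Hα : ∃ᶠ i in atTop, bandP (sQ m) (sK m) (α i) := by
    refine ((hαl (c/2) hc2).and_eventually (hαu (c/2) hc2)).mono ?_
    rintro i ⟨h1, h2⟩
    rw [bandP, hQ, hK, ← hc]
    have : |α i - f| ≤ c/2 := abs_le.mpr ⟨by linarith, by linarith⟩
    calc |α i - (q:ℝ)| ≤ |α i - f| + |f - (q:ℝ)| := abs_sub_le _ _ _
      _ ≤ c/2 + c/2 := by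
          rw [abs_sub_comm f (q:ℝ)]
          exact add_le_add this hqf
      _ = c := by ring
  have Hβ : ∃ᶠ j in atTop, bandP (sR m) (sK m) (β j) := by
    refine ((hβl (c/2) hc2).and_eventually (hβu (c/2) hc2)).mono ?_
    rintro j ⟨h1, h2⟩
    rw [bandP, hR, hK, ← hc]
    have : |β j - g| ≤ c/2 := abs_le.mpr ⟨by linarith, by linarith⟩
    calc |β j - (r:ℝ)| ≤ |β j - g| + |g - (r:ℝ)| := abs_sub_le _ _ _
      _ ≤ c/2 + c/2 := by
          rw [abs_sub_comm g (r:ℝ)]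
          exact add_le_add this hrg
      _ = c := by ring
  rw [frequently_atTop]
  intro t₀
  -- find an emission slot n ≥ t₀
  obtain ⟨i, hi_ge, hi_band⟩ := frequently_atTop.mp Hα (front α β m t₀).1
  obtain ⟨j, hj_ge, hj_band⟩ := frequently_atTop.mp Hβ (front α β m t₀).2
  set n₁ : ℕ := max (max i j) t₀ with hn₁
  have hex : ∃ n, t₀ ≤ n ∧ n ≤ n₁ ∧ econd α β m n := by
    by_contra hno
    push_neg at hno
    have hfr : ∀ d, t₀ + d ≤ n₁ + 1 → front α β m (t₀ + d) = front α β m t₀ := by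
      intro d
      induction d with
      | zero => intro _; rfl
      | succ d ih =>
        intro hle
        have hd : t₀ + d ≤ n₁ := by omega
        have ihe := ih (by omega)
        rw [show t₀ + (d+1) = (t₀ + d) + 1 from rfl, front_succ,
          dif_neg (hno (t₀ + d) (by omega) hd), ihe]
    have hfr₁ : front α β m n₁ = front α β m t₀ := by
      have h₀ : t₀ ≤ n₁ := le_max_right _ _
      have := hfr (n₁ - t₀) (by omega)
      rwa [Nat.add_sub_cancel' h₀] at this
    refine hno n₁ (le_max_right _ _) le_rfl ⟨⟨i, ?_, ?_, hi_band⟩, ⟨j, ?_, ?_, hj_band⟩⟩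
    · rw [hfr₁]; exact hi_ge
    · exact le_trans (le_trans (le_max_left i j) (le_max_left _ _)) (Nat.right_le_pair m n₁)
    · rw [hfr₁]; exact hj_ge
    · exact le_trans (le_trans (le_max_right i j) (le_max_left _ _)) (Nat.right_le_pair m n₁)
  obtain ⟨n, hn1, _, hcond⟩ := hex
  refine ⟨Nat.pair m n, le_trans hn1 (Nat.right_le_pair m n), ?_⟩
  have hval : emitv φ α β (Nat.pair m n) =
      φ (α (hcond.1.choose)) (β (hcond.2.choose)) := by
    rw [emitv_pair, emitp, dif_pos hcond]
  obtain ⟨hp1, hp2, hband1⟩ := hcond.1.choose_spec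
  obtain ⟨hp1', hp2', hband2⟩ := hcond.2.choose_spec
  generalize hgen1 : hcond.1.choose = i₀ at hval hband1
  generalize hgen2 : hcond.2.choose = j₀ at hval hband2
  rw [hval]
  rw [bandP, hQ, hK, ← hc] at hband1
  rw [bandP, hR, hK, ← hc] at hband2
  have hαf : |α i₀ - f| ≤ 3 * c / 2 := by
    calc |α i₀ - f| ≤ |α i₀ - (q:ℝ)| + |(q:ℝ) - f| := abs_sub_le _ _ _
      _ ≤ c + c/2 := add_le_add hband1 hqf
      _ = 3 * c / 2 := by ring
  have hβg : |β j₀ - g| ≤ 3 * c / 2 := by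
    calc |β j₀ - g| ≤ |β j₀ - (r:ℝ)| + |(r:ℝ) - g| := abs_sub_le _ _ _
      _ ≤ c + c/2 := add_le_add hband2 hrg
      _ = 3 * c / 2 := by ring
  have hl := hlip (α i₀) (β j₀) f g
  have habs : |φ (α i₀) (β j₀) - φ f g| ≤ 3 * c := le_trans hl (by linarith)
  have h3 := (abs_le.mp habs).1
  linarith


/-! ### Locality: the construction only reads finitely much of the input -/

lemma scond_congr {α β α' β' : ℕ → ℝ} {m n : ℕ} {p : ℕ × ℕ}
    (hA : ∀ i, i ≤ Nat.pair m n → α i = α' i)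
    (hB : ∀ j, j ≤ Nat.pair m n → β j = β' j) :
    scond α β m n p ↔ scond α' β' m n p := by
  unfold scond
  constructor <;> rintro ⟨⟨i, h1, h2, h3⟩, ⟨j, h4, h5, h6⟩⟩
  · exact ⟨⟨i, h1, h2, by rw [← hA i h2]; exact h3⟩, ⟨j, h4, h5, by rw [← hB j h5]; exact h6⟩⟩
  · exact ⟨⟨i, h1, h2, by rw [hA i h2]; exact h3⟩, ⟨j, h4, h5, by rw [hB j h5]; exact h6⟩⟩

open Classical in
lemma front_congr {α β α' β' : ℕ → ℝ} (m : ℕ) :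
    ∀ n, (∀ i, i < Nat.pair m n → α i = α' i) → (∀ j, j < Nat.pair m n → β j = β' j) →
      front α β m n = front α' β' m n
  | 0, _, _ => rfl
  | n + 1, hA, hB => by
    have hlt : Nat.pair m n < Nat.pair m (n + 1) :=
      Nat.pair_lt_pair_right m (Nat.lt_succ_self n)
    have hA' : ∀ i, i ≤ Nat.pair m n → α i = α' i := fun i hi => hA i (lt_of_le_of_lt hi hlt)
    have hB' : ∀ j, j ≤ Nat.pair m n → β j = β' j := fun j hj => hB j (lt_of_le_of_lt hj hlt)
    have ih : front α β m n = front α' β' m n :=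
      front_congr m n (fun i hi => hA i (hi.trans hlt)) (fun j hj => hB j (hj.trans hlt))
    rw [front_succ, front_succ]
    by_cases h : econd α' β' m n
    · have h0 : econd α β m n := by
        rw [show econd α β m n = scond α β m n (front α β m n) from rfl, ih,
          scond_congr hA' hB']
        exact h
      rw [dif_pos h0, dif_pos h]
      have hiff1 : ∀ i, ((front α β m n).1 ≤ i ∧ i ≤ Nat.pair m n ∧
          bandP (sQ m) (sK m) (α i)) ↔ ((front α' β' m n).1 ≤ i ∧ i ≤ Nat.pair m n ∧
          bandP (sQ m) (sK m) (α' i)) := by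
        intro i
        rw [ih]
        constructor <;> rintro ⟨h1, h2, h3⟩
        · exact ⟨h1, h2, by rw [← hA' i h2]; exact h3⟩
        · exact ⟨h1, h2, by rw [hA' i h2]; exact h3⟩
      have hiff2 : ∀ j, ((front α β m n).2 ≤ j ∧ j ≤ Nat.pair m n ∧
          bandP (sR m) (sK m) (β j)) ↔ ((front α' β' m n).2 ≤ j ∧ j ≤ Nat.pair m n ∧
          bandP (sR m) (sK m) (β' j)) := by
        intro j
        rw [ih]
        constructor <;> rintro ⟨h1, h2, h3⟩
        · exact ⟨h1, h2, by rw [← hB' j h2]; exact h3⟩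
        · exact ⟨h1, h2, by rw [hB' j h2]; exact h3⟩
      have e1 : h0.1.choose = h.1.choose := by
        congr 1
        · exact funext fun i => propext (hiff1 i)
      have e2 : h0.2.choose = h.2.choose := by
        congr 1
        · exact funext fun j => propext (hiff2 j)
      rw [e1, e2]
    · have h0 : ¬ econd α β m n := by
        rw [show econd α β m n = scond α β m n (front α β m n) from rfl, ih,
          scond_congr hA' hB']
        exact h
      rw [dif_neg h0, dif_neg h, ih]

open Classical in
lemma emitv_congr (φ : ℝ → ℝ → ℝ) {α β α' β' : ℕ → ℝ} (t : ℕ)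
    (hA : ∀ i, i ≤ t → α i = α' i) (hB : ∀ j, j ≤ t → β j = β' j) :
    emitv φ α β t = emitv φ α' β' t := by
  set m := (Nat.unpair t).1 with hm
  set n := (Nat.unpair t).2 with hn
  have hpt : Nat.pair m n = t := by rw [hm, hn, Nat.pair_unpair]
  have hA' : ∀ i, i ≤ Nat.pair m n → α i = α' i := fun i hi => hA i (by omega)
  have hB' : ∀ j, j ≤ Nat.pair m n → β j = β' j := fun j hj => hB j (by omega)
  have hAlt : ∀ i, i < Nat.pair m n → α i = α' i := fun i hi => hA' i (le_of_lt hi)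
  have hBlt : ∀ j, j < Nat.pair m n → β j = β' j := fun j hj => hB' j (le_of_lt hj)
  have ih : front α β m n = front α' β' m n := front_congr m n hAlt hBlt
  rw [emitv, emitv, ← hm, ← hn, emitp, emitp]
  by_cases h : econd α' β' m n
  · have h0 : econd α β m n := by
      rw [show econd α β m n = scond α β m n (front α β m n) from rfl, ih,
        scond_congr hA' hB']
      exact h
    rw [dif_pos h0, dif_pos h]
    have hiff1 : ∀ i, ((front α β m n).1 ≤ i ∧ i ≤ Nat.pair m n ∧
        bandP (sQ m) (sK m) (α i)) ↔ ((front α' β' m n).1 ≤ i ∧ i ≤ Nat.pair m n ∧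
        bandP (sQ m) (sK m) (α' i)) := by
      intro i
      rw [ih]
      constructor <;> rintro ⟨h1, h2, h3⟩
      · exact ⟨h1, h2, by rw [← hA' i h2]; exact h3⟩
      · exact ⟨h1, h2, by rw [hA' i h2]; exact h3⟩
    have hiff2 : ∀ j, ((front α β m n).2 ≤ j ∧ j ≤ Nat.pair m n ∧
        bandP (sR m) (sK m) (β j)) ↔ ((front α' β' m n).2 ≤ j ∧ j ≤ Nat.pair m n ∧
        bandP (sR m) (sK m) (β' j)) := by
      intro j
      rw [ih]
      constructor <;> rintro ⟨h1, h2, h3⟩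
      · exact ⟨h1, h2, by rw [← hB' j h2]; exact h3⟩
      · exact ⟨h1, h2, by rw [hB' j h2]; exact h3⟩
    have e1 : h0.1.choose = h.1.choose := by
      congr 1
      · exact funext fun i => propext (hiff1 i)
    have e2 : h0.2.choose = h.2.choose := by
      congr 1
      · exact funext fun j => propext (hiff2 j)
    rw [e1, e2, hA' _ ((h.1.choose_spec).2.1), hB' _ ((h.2.choose_spec).2.1)]
  · have h0 : ¬ econd α β m n := by
      rw [show econd α β m n = scond α β m n (front α β m n) from rfl, ih,
        scond_congr hA' hB']
      exact h
    rw [dif_neg h0, dif_neg h]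


/-! ### EReal glue -/

lemma aux_ge (c : ℝ) (X : EReal) (h : ∀ ε : ℝ, 0 < ε → ((c - ε : ℝ) : EReal) ≤ X) :
    (c : EReal) ≤ X := by
  induction X using EReal.rec with
  | bot => exact absurd (le_bot_iff.mp (h 1 one_pos)) (EReal.coe_ne_bot _)
  | coe x =>
    have hx : ∀ ε : ℝ, 0 < ε → c - ε ≤ x := fun ε hε => by exact_mod_cast h ε hε
    have : c ≤ x := by
      by_contra hcx
      push_neg at hcx
      have := hx ((c - x)/2) (by linarith)
      linarith
    exact_mod_cast this
  | top => exact le_top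

lemma aux_le (c : ℝ) (X : EReal) (h : ∀ ε : ℝ, 0 < ε → X ≤ ((c + ε : ℝ) : EReal)) :
    X ≤ (c : EReal) := by
  induction X using EReal.rec with
  | bot => exact bot_le
  | coe x =>
    have hx : ∀ ε : ℝ, 0 < ε → x ≤ c + ε := fun ε hε => by exact_mod_cast h ε hε
    have : x ≤ c := by
      by_contra hcx
      push_neg at hcx
      have := hx ((x - c)/2) (by linarith)
      linarith
    exact_mod_cast this
  | top => exact absurd (top_le_iff.mp (h 1 one_pos)) (EReal.coe_ne_top _)

lemma of_limsup (α : ℕ → ℝ) (c : ℝ)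
    (h : (c : EReal) = limsup (fun t => ((α t : ℝ) : EReal)) atTop) :
    (∀ ε : ℝ, 0 < ε → ∀ᶠ t in atTop, α t ≤ c + ε) ∧
    (∀ ε : ℝ, 0 < ε → ∃ᶠ t in atTop, c - ε ≤ α t) := by
  constructor
  · intro ε hε
    have h1 : limsup (fun t => ((α t : ℝ) : EReal)) atTop < ((c + ε : ℝ) : EReal) := by
      rw [← h]
      exact_mod_cast (show c < c + ε by linarith)
    exact (Filter.eventually_lt_of_limsup_lt h1).mono fun t ht => by exact_mod_cast ht.le
  · intro ε hε
    have h1 : ((c - ε : ℝ) : EReal) < limsup (fun t => ((α t : ℝ) : EReal)) atTop := by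
      rw [← h]
      exact_mod_cast (show c - ε < c by linarith)
    exact (Filter.frequently_lt_of_lt_limsup (by isBoundedDefault) h1).mono fun t ht => by
      exact_mod_cast ht.le

lemma limsup_eq_of_bounds (e : ℕ → ℝ) (c : ℝ)
    (hup : ∀ ε : ℝ, 0 < ε → ∀ᶠ t in atTop, e t ≤ c + ε)
    (hlo : ∀ ε : ℝ, 0 < ε → ∃ᶠ t in atTop, c - ε ≤ e t) :
    (c : EReal) = limsup (fun t => ((e t : ℝ) : EReal)) atTop := by
  apply le_antisymm
  · apply aux_ge
    intro ε hε
    exact Filter.le_limsup_of_frequently_le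
      ((hlo ε hε).mono fun t ht => by exact_mod_cast ht) (by isBoundedDefault)
  · apply aux_le
    intro ε hε
    exact Filter.limsup_le_of_le (by isBoundedDefault)
      ((hup ε hε).mono fun t ht => by exact_mod_cast ht)


/-! ### From limsup witnesses on a tree to the combined witness -/

lemma initSeg_take {γ : Type*} (x : ℕ → γ) {k n : ℕ} (h : k ≤ n) :
    (initSeg x n).take k = initSeg x k := by
  apply List.ext_getElem
  · simp [initSeg, h]
  · intro i h1 h2
    simp [initSeg]

lemma comb {A : Type*} {T : Set (List A)} (φ : ℝ → ℝ → ℝ)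
    (hmono : ∀ a b a' b' : ℝ, a ≤ a' → b ≤ b' → φ a b ≤ φ a' b')
    (hlip : ∀ a b a' b' : ℝ, |φ a b - φ a' b'| ≤ |a - a'| + |b - b'|)
    {f g : Branches T → ℝ} (hf : IsLimsupFunction f) (hg : IsLimsupFunction g) :
    IsLimsupFunction (fun x => φ (f x) (g x)) := by
  obtain ⟨u, hu⟩ := hf
  obtain ⟨v, hv⟩ := hg
  set w : List A → ℝ := fun s =>
    emitv φ (fun i => u (s.take (i + 1))) (fun j => v (s.take (j + 1))) (s.length - 1)
    with hwdef
  refine ⟨w, fun x => ?_⟩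
  have hw : ∀ t : ℕ, w (initSeg x.val (t + 1)) =
      emitv φ (fun i => u (initSeg x.val (i + 1))) (fun j => v (initSeg x.val (j + 1))) t := by
    intro t
    show emitv φ (fun i => u ((initSeg x.val (t + 1)).take (i + 1)))
      (fun j => v ((initSeg x.val (t + 1)).take (j + 1)))
      ((initSeg x.val (t + 1)).length - 1) = _
    have hlen : (initSeg x.val (t + 1)).length = t + 1 := by simp [initSeg]
    rw [hlen]
    simp only [Nat.add_sub_cancel]
    apply emitv_congr
    · intro i hi
      rw [initSeg_take x.val (by omega : i + 1 ≤ t + 1)]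
    · intro j hj
      rw [initSeg_take x.val (by omega : j + 1 ≤ t + 1)]
  obtain ⟨HU1, HU2⟩ := of_limsup (fun i => u (initSeg x.val (i + 1))) (f x) (hu x)
  obtain ⟨HV1, HV2⟩ := of_limsup (fun j => v (initSeg x.val (j + 1))) (g x) (hv x)
  have up := emit_upper φ hmono hlip _ _ _ _ HU1 HV1
  have lo := emit_lower φ hlip _ _ _ _ HU1 HU2 HV1 HV2
  have key := limsup_eq_of_bounds
    (emitv φ (fun i => u (initSeg x.val (i + 1))) (fun j => v (initSeg x.val (j + 1))))
    (φ (f x) (g x)) up lo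
  have hfun : (fun t : ℕ => ((w (initSeg x.val (t + 1)) : ℝ) : EReal)) =
      fun t : ℕ => ((emitv φ (fun i => u (initSeg x.val (i + 1)))
        (fun j => v (initSeg x.val (j + 1))) t : ℝ) : EReal) :=
    funext fun t => by rw [hw t]
  rw [hfun]
  exact key

lemma lip_add : ∀ a b a' b' : ℝ, |a + b - (a' + b')| ≤ |a - a'| + |b - b'| := by
  intro a b a' b'
  have h : a + b - (a' + b') = (a - a') + (b - b') := by ring
  rw [h]
  exact abs_add_le _ _

lemma lip_min : ∀ a b a' b' : ℝ, |min a b - min a' b'| ≤ |a - a'| + |b - b'| :=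
  fun a b a' b' => le_trans (abs_min_sub_min_le_max a b a' b')
    (max_le (le_add_of_nonneg_right (abs_nonneg _)) (le_add_of_nonneg_left (abs_nonneg _)))

lemma lip_max : ∀ a b a' b' : ℝ, |max a b - max a' b'| ≤ |a - a'| + |b - b'| :=
  fun a b a' b' => le_trans (abs_max_sub_max_le_max a b a' b')
    (max_le (le_add_of_nonneg_right (abs_nonneg _)) (le_add_of_nonneg_left (abs_nonneg _)))

end LimsupComb

/-- The sum, the minimum, and the maximum of two limsup functions is a limsup function. -/
theorem isLimsupFunction_add_min_max
    {A : Type*} [Countable A] [Nonempty A] [TopologicalSpace A] [DiscreteTopology A]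
    {T : Set (List A)} (hT : IsPrunedTree T) (f g : Branches T → ℝ)
    (hf : IsLimsupFunction f) (hg : IsLimsupFunction g) :
    IsLimsupFunction (fun x => f x + g x) ∧
    IsLimsupFunction (fun x => min (f x) (g x)) ∧
    IsLimsupFunction (fun x => max (f x) (g x)) := by
  refine ⟨?_, ?_, ?_⟩
  · exact LimsupComb.comb (fun a b => a + b)
      (fun a b a' b' h1 h2 => add_le_add h1 h2) LimsupComb.lip_add hf hg
  · exact LimsupComb.comb (fun a b => min a b)
      (fun a b a' b' h1 h2 => min_le_min h1 h2) LimsupComb.lip_min hf hg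
  · exact LimsupComb.comb (fun a b => max a b)
      (fun a b a' b' h1 h2 => max_le_max h1 h2) LimsupComb.lip_max hf hg
end

section
/- Let T be a pruned tree on a non-empty countable set A and let X be the set of infinite branches of T with its cylinder-set topology. If a sequence of limsup functions fₙ : X → ℝ converges uniformly to a function f : X → ℝ, then f is a limsup function. -/
open Filter Topology

-- machine state
open Classical in
noncomputable def mstate {A : Type*} (U : ℕ → List A → ℝ) (q : ℕ → ℚ) (n : ℕ) :
    ℕ → List A → ℕ × ℕ
  | 0, _ => (1, n)
  | (L+1), s =>
    if L + 1 ≤ n then (1, n) else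
    (if (∀ k ≤ n + (mstate U q n L s).1, ∃ i, (mstate U q n L s).2 < i ∧ i ≤ L + 1 ∧
        (q n : ℝ) - (2:ℝ)⁻¹ ^ k < U k (s.take i))
     then ((mstate U q n L s).1 + 1, L + 1) else mstate U q n L s)

lemma mstate_take {A : Type*} (U : ℕ → List A → ℝ) (q : ℕ → ℚ) (n : ℕ) :
    ∀ (L : ℕ) (s s' : List A), s.take L = s'.take L →
      mstate U q n L s = mstate U q n L s' := by
  intro L
  induction L with
  | zero => intro s s' _; rfl
  | succ L ih =>
    intro s s' h
    have hL : s.take L = s'.take L := by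
      have := congrArg (List.take L) h
      simpa [List.take_take, Nat.min_eq_left (Nat.le_succ L)] using this
    have htk : ∀ i, i ≤ L + 1 → s.take i = s'.take i := by
      intro i hi
      have := congrArg (List.take i) h
      simpa [List.take_take, Nat.min_eq_left hi] using this
    have hrec := ih s s' hL
    show mstate U q n (L+1) s = mstate U q n (L+1) s'
    rw [mstate, mstate, hrec]
    by_cases h1 : L + 1 ≤ n
    · simp [h1]
    · simp only [if_neg h1]
      by_cases h2 : (∀ k ≤ n + (mstate U q n L s').1, ∃ i, (mstate U q n L s').2 < i ∧ i ≤ L + 1 ∧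
        (q n : ℝ) - (2:ℝ)⁻¹ ^ k < U k (s'.take i))
      · rw [if_pos h2, if_pos]
        intro k hk
        rcases h2 k hk with ⟨i, hi1, hi2, hi3⟩
        exact ⟨i, hi1, hi2, by rwa [htk i hi2]⟩
      · rw [if_neg h2, if_neg]
        intro hc
        apply h2
        intro k hk
        rcases hc k hk with ⟨i, hi1, hi2, hi3⟩
        exact ⟨i, hi1, hi2, by rwa [← htk i hi2]⟩

-- combined witness
open Classical in
noncomputable def uwit {A : Type*} (U : ℕ → List A → ℝ) (q : ℕ → ℚ) (s : List A) : ℝ :=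
  if h : ((Finset.range s.length).filter
      (fun n => (mstate U q n s.length s).2 = s.length)).Nonempty
  then ((Finset.range s.length).filter
      (fun n => (mstate U q n s.length s).2 = s.length)).sup' h (fun n => ((q n : ℚ) : ℝ))
  else -(s.length : ℝ)


/-- A uniform limit of limsup functions is a limsup function. -/
theorem isLimsupFunction_of_tendstoUniformly
    {A : Type*} [Countable A] [Nonempty A] [TopologicalSpace A] [DiscreteTopology A]
    {T : Set (List A)} (hT : IsPrunedTree T) (f : Branches T → ℝ)
    (F : ℕ → Branches T → ℝ) (hF : ∀ n, IsLimsupFunction (F n))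
    (hunif : TendstoUniformly F f Filter.atTop) :
    IsLimsupFunction f := by
  classical
  set e : ℕ → ℝ := fun k => (2:ℝ)⁻¹ ^ k with he_def
  have he_pos : ∀ k, 0 < e k := fun k => pow_pos (by norm_num) k
  have hφ' : ∀ k : ℕ, ∃ N, ∀ x, dist (f x) (F N x) < e k := by
    intro k
    exact ((Metric.tendstoUniformly_iff.mp hunif (e k) (he_pos k))).exists
  choose φ hφ using hφ'
  choose U hU using fun k => hF (φ k)
  set q : ℕ → ℚ := ((Denumerable.eqv ℚ).symm : ℕ → ℚ) with hq_def
  have hqsurj : Function.Surjective q := (Denumerable.eqv ℚ).symm.surjective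
  refine ⟨uwit U q, ?_⟩
  intro x
  set fx : ℝ := f x with hfx_def
  set a : ℕ → ℕ → ℝ := fun k i => U k (initSeg x.val i) with ha_def
  set c : ℕ → ℝ := fun k => F (φ k) x with hc_def
  have hlim : ∀ k, ((c k : ℝ) : EReal) = limsup (fun t : ℕ => (a k (t+1) : EReal)) atTop :=
    fun k => hU k x
  have hcd : ∀ k, |fx - c k| < e k := by
    intro k; have := hφ k x; rwa [Real.dist_eq] at this
  have hc_lower : ∀ k, fx - e k < c k := by
    intro k; have h := abs_lt.mp (hcd k); linarith [h.1, h.2]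
  have hc_upper : ∀ k, c k < fx + e k := by
    intro k; have h := abs_lt.mp (hcd k); linarith [h.1, h.2]
  have Hfreq : ∀ k (y : ℝ), y < c k → ∀ m : ℕ, ∃ i, m ≤ i ∧ y < a k i := by
    intro k y hy m
    have h1 : (y : EReal) < limsup (fun t : ℕ => (a k (t+1) : EReal)) atTop := by
      rw [← hlim k]; exact_mod_cast hy
    have h2 := Filter.frequently_lt_of_lt_limsup (by isBoundedDefault) h1
    rcases (frequently_atTop.mp h2) m with ⟨t, ht, hlt⟩
    exact ⟨t+1, le_trans ht (Nat.le_succ t), by exact_mod_cast hlt⟩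
  have Hev : ∀ k (y : ℝ), c k < y → ∃ N, ∀ i, N ≤ i → a k i < y := by
    intro k y hy
    have h1 : limsup (fun t : ℕ => (a k (t+1) : EReal)) atTop < (y : EReal) := by
      rw [← hlim k]; exact_mod_cast hy
    have h2 := Filter.eventually_lt_of_limsup_lt h1
    rcases eventually_atTop.mp h2 with ⟨N, hN⟩
    refine ⟨N+1, fun i hi => ?_⟩
    have h3 := hN (i-1) (by omega)
    have h4 : i - 1 + 1 = i := by omega
    rw [h4] at h3
    exact_mod_cast h3
  set S : ℕ → ℕ → ℕ × ℕ := fun n t => mstate U q n t (initSeg x.val t) with hS_def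
  set Cond : ℕ → ℕ × ℕ → ℕ → Prop :=
    fun n p ℓ => ∀ k ≤ n + p.1, ∃ i, p.2 < i ∧ i ≤ ℓ ∧ (q n : ℝ) - e k < a k i with hCond_def
  have hlen : ∀ m : ℕ, (initSeg x.val m).length = m := by intro m; simp [initSeg]
  have htake : ∀ i m : ℕ, i ≤ m → (initSeg x.val m).take i = initSeg x.val i := by
    intro i m him
    apply List.ext_getElem
    · simp [initSeg, him]
    · intro j h1 h2; simp [initSeg, List.getElem_take]
  have hstep : ∀ n t, S n (t+1) =
      if t + 1 ≤ n then (1, n)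
      else if Cond n (S n t) (t+1) then ((S n t).1 + 1, t+1) else S n t := by
    intro n t
    have hps : mstate U q n t (initSeg x.val (t+1)) = S n t := by
      apply mstate_take
      rw [htake t (t+1) (Nat.le_succ t), List.take_of_length_le (le_of_eq (hlen t))]
    have hiff : (∀ k ≤ n + (S n t).1, ∃ i, (S n t).2 < i ∧ i ≤ t + 1 ∧
        (q n : ℝ) - (2:ℝ)⁻¹ ^ k < U k ((initSeg x.val (t+1)).take i)) ↔ Cond n (S n t) (t+1) := by
      constructor
      · intro h k hk; rcases h k hk with ⟨i, hi1, hi2, hi3⟩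
        exact ⟨i, hi1, hi2, by rwa [htake i (t+1) hi2] at hi3⟩
      · intro h k hk; rcases h k hk with ⟨i, hi1, hi2, hi3⟩
        exact ⟨i, hi1, hi2, by rwa [htake i (t+1) hi2]⟩
    show mstate U q n (t+1) (initSeg x.val (t+1)) = _
    rw [mstate, hps]
    by_cases h1 : t + 1 ≤ n
    · rw [if_pos h1, if_pos h1]
    · rw [if_neg h1, if_neg h1]
      by_cases h2 : Cond n (S n t) (t+1)
      · rw [if_pos (hiff.mpr h2), if_pos h2]
      · rw [if_neg (fun hc => h2 (hiff.mp hc)), if_neg h2]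
  have hS0 : ∀ n t, t ≤ n → S n t = (1, n) := by
    intro n t
    induction t with
    | zero => intro _; rfl
    | succ t ih => intro h; rw [hstep, if_pos h]
  have hr1 : ∀ n t, 1 ≤ (S n t).1 := by
    intro n t
    induction t with
    | zero => exact le_of_eq (congrArg Prod.fst (hS0 n 0 (Nat.zero_le n))).symm
    | succ t ih =>
      rw [hstep]
      by_cases h1 : t + 1 ≤ n
      · rw [if_pos h1]
      · rw [if_neg h1]
        by_cases h2 : Cond n (S n t) (t+1)
        · rw [if_pos h2]; omega
        · rw [if_neg h2]; exact ih
  have hG_le : ∀ n t, (S n t).2 ≤ max n t := by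
    intro n t
    induction t with
    | zero => rw [hS0 n 0 (Nat.zero_le n)]; omega
    | succ t ih =>
      rw [hstep]
      by_cases h1 : t + 1 ≤ n
      · rw [if_pos h1]; simp
      · rw [if_neg h1]
        by_cases h2 : Cond n (S n t) (t+1)
        · rw [if_pos h2]; simp
        · rw [if_neg h2]; omega
  have hINV : ∀ n t, n + (S n t).1 ≤ (S n t).2 + 1 := by
    intro n t
    induction t with
    | zero => rw [hS0 n 0 (Nat.zero_le n)]
    | succ t ih =>
      rw [hstep]
      by_cases h1 : t + 1 ≤ n
      · rw [if_pos h1]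
      · rw [if_neg h1]
        by_cases h2 : Cond n (S n t) (t+1)
        · rw [if_pos h2]
          rcases h2 0 (Nat.zero_le _) with ⟨i, hi1, hi2, _⟩
          simp only []
          omega
        · rw [if_neg h2]; exact ih
  have hmono : ∀ n t t', t ≤ t' → (S n t).1 ≤ (S n t').1 := by
    intro n t t' h
    induction t', h using Nat.le_induction with
    | base => exact le_refl _
    | succ t' ht' ih =>
      rw [hstep]
      by_cases h1 : t' + 1 ≤ n
      · rw [if_pos h1]
        have hst : S n t = (1, n) := hS0 n t (by omega)
        rw [hst]
      · rw [if_neg h1]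
        by_cases h2 : Cond n (S n t') (t'+1)
        · rw [if_pos h2]; exact le_trans ih (by omega)
        · rw [if_neg h2]; exact ih
  set Em : ℕ → ℕ → Prop := fun n ℓ => n < ℓ ∧ (S n ℓ).2 = ℓ with hEm_def
  have hEmIff : ∀ n t, Em n (t+1) ↔ (n < t + 1 ∧ Cond n (S n t) (t+1)) := by
    intro n t
    constructor
    · rintro ⟨hn, hG⟩
      refine ⟨hn, ?_⟩
      by_contra h2
      have h1 : ¬ (t + 1 ≤ n) := by omega
      have hs := hstep n t
      rw [if_neg h1, if_neg h2] at hs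
      rw [hs] at hG
      have hle := hG_le n t
      have hmax : max n t = t := max_eq_right (by omega)
      omega
    · rintro ⟨hn, hc⟩
      refine ⟨hn, ?_⟩
      have hs := hstep n t
      rw [if_neg (by omega), if_pos hc] at hs
      rw [hs]
  have hinc : ∀ n t, Em n (t+1) → (S n (t+1)).1 = (S n t).1 + 1 := by
    intro n t hEm
    rcases (hEmIff n t).mp hEm with ⟨hn, hc⟩
    have hs := hstep n t
    rw [if_neg (by omega), if_pos hc] at hs
    rw [hs]
  set W : ℕ → ℝ := fun t => uwit U q (initSeg x.val (t+1)) with hW_def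
  have hWemit : ∀ t n, Em n (t+1) → ((q n : ℚ) : ℝ) ≤ W t := by
    intro t n hEm
    show ((q n : ℚ) : ℝ) ≤ uwit U q (initSeg x.val (t+1))
    have hmem : n ∈ (Finset.range ((initSeg x.val (t+1)).length)).filter
        (fun n => (mstate U q n ((initSeg x.val (t+1)).length) (initSeg x.val (t+1))).2
          = (initSeg x.val (t+1)).length) := by
      rw [Finset.mem_filter, Finset.mem_range, hlen]
      exact ⟨hEm.1, hEm.2⟩
    rw [uwit, dif_pos ⟨n, hmem⟩]
    exact Finset.le_sup' (fun n => ((q n : ℚ) : ℝ)) hmem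
  have hWbound : ∀ t (y : ℝ), y < W t →
      ((∃ n, Em n (t+1) ∧ y < ((q n : ℚ) : ℝ)) ∨ y < -((t+1 : ℕ) : ℝ)) := by
    intro t y hy
    have hy' : y < uwit U q (initSeg x.val (t+1)) := hy
    rw [uwit] at hy'
    by_cases hc : ((Finset.range ((initSeg x.val (t+1)).length)).filter
        (fun n => (mstate U q n ((initSeg x.val (t+1)).length) (initSeg x.val (t+1))).2
          = (initSeg x.val (t+1)).length)).Nonempty
    · rw [dif_pos hc] at hy'
      rcases (Finset.lt_sup'_iff hc).mp hy' with ⟨n, hmem, hlt⟩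
      rw [Finset.mem_filter, Finset.mem_range, hlen] at hmem
      exact Or.inl ⟨n, ⟨hmem.1, hmem.2⟩, hlt⟩
    · rw [dif_neg hc] at hy'
      right
      rwa [hlen] at hy' 
  have hL : ∀ n, ((q n : ℚ) : ℝ) < fx → ∀ m : ℕ, ∃ ℓ, m < ℓ ∧ Em n ℓ := by
    intro n hqn m
    by_contra hcon
    push_neg at hcon
    set m' := max m n with hm'
    have hconst : ∀ t, m' ≤ t → S n t = S n m' := by
      intro t ht
      induction t, ht using Nat.le_induction with
      | base => rfl
      | succ t ht ih =>
        have h1 : ¬ (t + 1 ≤ n) := by omega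
        have h2 : ¬ Cond n (S n t) (t+1) := by
          intro hc
          exact hcon (t+1) (by omega) ((hEmIff n t).mpr ⟨by omega, hc⟩)
        rw [hstep, if_neg h1, if_neg h2]; exact ih
    have hsup : ∀ k : ℕ, ∃ i, (k ≤ n + (S n m').1 →
        (max (S n m').2 m' < i ∧ (q n : ℝ) - e k < a k i)) := by
      intro k
      by_cases hk : k ≤ n + (S n m').1
      · have hyk : (q n : ℝ) - e k < c k := by
          have h1 := hc_lower k
          have h2 := he_pos k
          linarith
        rcases Hfreq k _ hyk (max (S n m').2 m' + 1) with ⟨i, hi1, hi2⟩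
        exact ⟨i, fun _ => ⟨by omega, hi2⟩⟩
      · exact ⟨0, fun h => absurd h hk⟩
    choose I hI using hsup
    set Tt := max ((Finset.range (n + (S n m').1 + 1)).sup I) (m' + 1) with hTt_def
    have hT1 : m' + 1 ≤ Tt := le_max_right _ _
    have hcond : Cond n (S n (Tt - 1)) ((Tt - 1) + 1) := by
      rw [hconst (Tt - 1) (by omega)]
      intro k hk
      have hIk := hI k hk
      refine ⟨I k, ?_, ?_, hIk.2⟩
      · have := hIk.1
        omega
      · have hle : I k ≤ (Finset.range (n + (S n m').1 + 1)).sup I :=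
          Finset.le_sup (Finset.mem_range.mpr (by omega))
        omega
    have hEmT : Em n ((Tt - 1) + 1) := (hEmIff n (Tt - 1)).mpr ⟨by omega, hcond⟩
    exact hcon ((Tt - 1) + 1) (by omega) hEmT
  have hUppr : ∀ δ : ℝ, 0 < δ → {t : ℕ | fx + δ < W t}.Finite := by
    intro δ hδ
    obtain ⟨K, hK⟩ : ∃ K : ℕ, e K < δ/4 := exists_pow_lt_of_lt_one (by linarith) (by norm_num)
    obtain ⟨N, hN⟩ := Hev K (c K + δ/2) (by have := hc_upper K; linarith)
    set B := max K (N + 1) with hB_def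
    have hB1 : K ≤ B := le_max_left _ _
    have hB2 : N + 1 ≤ B := le_max_right _ _
    set P : ℕ → Prop := fun t => ∃ n, Em n (t+1) ∧ fx + δ < ((q n : ℚ) : ℝ) with hP_def
    have key : ∀ t, P t → ∃ n, Em n (t+1) ∧ n + (S n t).1 ≤ B + 1 := by
      rintro t ⟨n, hEm, hq⟩
      refine ⟨n, hEm, ?_⟩
      have hc := ((hEmIff n t).mp hEm).2
      by_cases hKr : K ≤ n + (S n t).1
      · rcases hc K hKr with ⟨i, hi1, hi2, hi3⟩
        have hval : c K + δ/2 < a K i := by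
          have h1 := hc_upper K
          linarith
        have hiN : i < N := by
          by_contra hge
          exact absurd hval (not_lt.mpr (le_of_lt (hN i (by omega))))
        have hinv := hINV n t
        omega
      · omega
    -- map each bad time to (n, round) pair
    have key' : ∀ t, ∃ n, P t → (Em n (t+1) ∧ n + (S n t).1 ≤ B + 1) := by
      intro t
      by_cases h : P t
      · rcases key t h with ⟨n, h1, h2⟩
        exact ⟨n, fun _ => ⟨h1, h2⟩⟩
      · exact ⟨0, fun hp => absurd hp h⟩
    choose nf hnf using key'
    have hPfin : {t : ℕ | P t}.Finite := by
      have hinj : Set.InjOn (fun t => (nf t, (S (nf t) t).1)) {t : ℕ | P t} := by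
        have hgen : ∀ t t', P t → P t' → t < t' →
            (nf t, (S (nf t) t).1) ≠ (nf t', (S (nf t') t').1) := by
          intro t t' ht ht' hlt heq
          have h1 : nf t = nf t' := congrArg Prod.fst heq
          have h2 : (S (nf t) t).1 = (S (nf t') t').1 := congrArg Prod.snd heq
          rw [← h1] at h2
          have hEmt : Em (nf t) (t+1) := (hnf t ht).1
          have h3 : (S (nf t) (t+1)).1 = (S (nf t) t).1 + 1 := hinc (nf t) t hEmt
          have h4 : (S (nf t) (t+1)).1 ≤ (S (nf t) t').1 := hmono (nf t) (t+1) t' (by omega)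
          omega
        intro t ht t' ht' heq
        rcases Nat.lt_trichotomy t t' with h | h | h
        · exact absurd heq (hgen t t' ht ht' h)
        · exact h
        · exact absurd heq.symm (hgen t' t ht' ht h)
      apply Set.Finite.of_finite_image _ hinj
      apply Set.Finite.subset
        (Finset.range (B+2) ×ˢ Finset.range (B+2) : Finset (ℕ × ℕ)).finite_toSet
      rintro y ⟨t, ht, rfl⟩
      have hspec := hnf t ht
      have hr := hr1 (nf t) t
      have hb := hspec.2
      simp only [Finset.coe_product, Set.mem_prod, Finset.mem_coe, Finset.mem_range]
      exact ⟨by omega, by omega⟩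
    have hfloor : {t : ℕ | fx + δ < -((t+1 : ℕ) : ℝ)}.Finite := by
      apply Set.Finite.subset (Set.finite_Iio (⌈-(fx + δ)⌉₊))
      intro t ht
      simp only [Set.mem_setOf_eq] at ht
      have h1 : (t : ℝ) < -(fx + δ) := by
        push_cast at ht ⊢
        linarith
      exact Set.mem_Iio.mpr (Nat.lt_ceil.mpr h1)
    apply Set.Finite.subset (hPfin.union hfloor)
    intro t ht
    simp only [Set.mem_setOf_eq] at ht
    rcases hWbound t (fx + δ) ht with h | h
    · exact Or.inl h
    · exact Or.inr h
  -- conclusion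
  show ((fx : ℝ) : EReal) = limsup (fun t : ℕ => ((W t : ℝ) : EReal)) atTop
  apply le_antisymm
  · -- fx ≤ limsup
    by_contra hcon
    push_neg at hcon
    obtain ⟨z, hz1, hz2⟩ := EReal.exists_between_coe_real hcon
    have hzfx : z < fx := by exact_mod_cast hz2
    obtain ⟨s, hs1, hs2⟩ := exists_rat_btwn hzfx
    obtain ⟨n, rfl⟩ := hqsurj s
    have hfreqW : ∃ᶠ t in atTop, ((z : ℝ) : EReal) ≤ ((W t : ℝ) : EReal) := by
      apply frequently_atTop.mpr
      intro m
      obtain ⟨ℓ, hℓ1, hℓ2⟩ := hL n hs2 m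
      have hℓpos : 1 ≤ ℓ := by
        have := hℓ2.1
        omega
      refine ⟨ℓ - 1, by omega, ?_⟩
      have hEm' : Em n ((ℓ - 1) + 1) := by
        have hℓ' : ℓ - 1 + 1 = ℓ := by omega
        rw [hℓ']
        exact hℓ2
      have hle : ((q n : ℚ) : ℝ) ≤ W (ℓ - 1) := hWemit (ℓ - 1) n hEm'
      have : z ≤ W (ℓ - 1) := le_trans (le_of_lt hs1) hle
      exact_mod_cast this
    have hge := le_limsup_of_frequently_le hfreqW
    exact absurd hge (not_le.mpr hz1)
  · -- limsup ≤ fx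
    by_contra hcon
    push_neg at hcon
    obtain ⟨z, hz1, hz2⟩ := EReal.exists_between_coe_real hcon
    have hzfx : fx < z := by exact_mod_cast hz1
    have hfin := hUppr (z - fx) (by linarith)
    obtain ⟨M, hM⟩ := hfin.bddAbove
    have hfreq := Filter.frequently_lt_of_lt_limsup (by isBoundedDefault) hz2
    obtain ⟨t, ht1, ht2⟩ := (frequently_atTop.mp hfreq) (M + 1)
    have hWt : fx + (z - fx) < W t := by
      have hzW : z < W t := by exact_mod_cast ht2
      linarith
    have htM : t ≤ M := hM hWt
    omega
end

section
/- Let T be a pruned tree on a non-empty countable set A and let X be the set of infinite branches of T with its cylinder-set topology. If X is uncountable and B ⊆ X is a Bernstein set, then the game Γ(1_B) for the indicator function 1_B : X → ℝ is not determined, i.e., neither Player I nor Player II has a winning strategy in Γ(1_B). -/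
/-!
If Player II had a winning strategy `τ`, then `1_B` would be the limsup of the continuous
functions `x ↦ τ (x₀, …, x_t)`, so `B` would be Borel. In an uncountable Polish space a Borel
set or its complement is uncountable and hence contains a Cantor set, which a Bernstein set
forbids.

If Player I had a winning strategy `σ`, playing it against the `0`-`1` sequences `b` gives a
continuous map `g : 2^ℕ → X` with `g b ∈ B` exactly when `b` is eventually `0` (the limsup of
Player II's moves is then `0`, and otherwise `1`). This preimage of `B` is countable, so the
Bernstein property, applied to the compact set `g(2^ℕ)` minus a countable set, makes the range
of `g` countable. By Baire's theorem some fiber of `g` has nonempty interior, which meets both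
the eventually-`0` sequences and their complement, as both are dense; so `g` takes one value
both inside and outside `B`.
-/

open Filter Topology

open Set Function

section CantorSpace

def eventuallyFalse : Set (ℕ → Bool) := {b | ∀ᶠ t in atTop, b t = false}

theorem countable_eventuallyFalse : eventuallyFalse.Countable := by
  have hinj : Injective fun b : ℕ → Bool => {t | b t = true} := fun b b' h =>
    funext fun t => Bool.eq_iff_iff.2 (Set.ext_iff.1 h t)
  refine (Set.Countable.ofPred_finite.preimage hinj).mono fun b hb => ?_
  rw [eventuallyFalse, mem_ofPred_eq, ← Nat.cofinite_eq_atTop, eventually_cofinite] at hb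
  simpa using hb

theorem dense_setOf_eventually_eq (c : Bool) :
    Dense {b : ℕ → Bool | ∀ᶠ t in atTop, b t = c} := by
  intro b
  have hlim : Tendsto (fun N t => if t < N then b t else c) atTop (𝓝 b) :=
    tendsto_pi_nhds.2 fun t => tendsto_const_nhds.congr'
      ((eventually_gt_atTop t).mono fun N hN => by simp [hN])
  refine mem_closure_of_tendsto hlim (Eventually.of_forall fun N => ?_)
  filter_upwards [eventually_ge_atTop N] with t ht
  simp [Nat.not_lt.2 ht]

theorem dense_compl_eventuallyFalse : Dense eventuallyFalseᶜ :=
  (dense_setOf_eventually_eq true).mono fun _ htrue hfalse => by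
    obtain ⟨t, ht, hf⟩ := (htrue.and hfalse).exists
    simp [ht] at hf

instance : PerfectSpace (ℕ → Bool) := by
  refine perfectSpace_iff_forall_not_isolated.2 fun b => ?_
  have hlim : Tendsto (fun n => update b n !(b n)) atTop (𝓝[≠] b) := by
    refine tendsto_nhdsWithin_iff.2 ⟨tendsto_pi_nhds.2 fun t => ?_, ?_⟩
    · exact tendsto_const_nhds.congr' ((eventually_gt_atTop t).mono fun n hn =>
        (update_of_ne hn.ne _ b).symm)
    · filter_upwards with n hn
      simpa using congrFun hn n
  exact hlim.neBot

theorem limsup_toNat_eq_indicator (b : ℕ → Bool) :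
    limsup (fun t => (((b t).toNat : ℝ) : EReal)) atTop
      = ((eventuallyFalseᶜ.indicator (fun _ => (1 : ℝ)) b : ℝ) : EReal) := by
  by_cases hb : b ∈ eventuallyFalse
  · rw [indicator_of_notMem (notMem_compl_iff.2 hb), EReal.coe_zero]
    refine (limsup_congr (hb.mono fun t ht => ?_)).trans (limsup_const 0)
    simp [ht]
  · rw [indicator_of_mem hb]
    refine le_antisymm (limsup_le_of_le (by isBoundedDefault) (Eventually.of_forall fun t => ?_))
      (le_limsup_of_frequently_le' ?_)
    · cases b t <;> simp
    · simp only [eventuallyFalse, mem_ofPred_eq, not_eventually] at hb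
      exact hb.mono fun t ht => by simp_all

end CantorSpace

theorem perfect_range_of_continuous_injective {X Y : Type*} [TopologicalSpace X] [CompactSpace X]
    [PerfectSpace X] [TopologicalSpace Y] [T2Space Y] {e : X → Y} (he : Continuous e)
    (hinj : Injective e) : Perfect (range e) := by
  refine ⟨(isCompact_range he).isClosed, ?_⟩
  rintro _ ⟨a, rfl⟩
  have hmap : map e (𝓝[≠] a) ≤ 𝓝[≠] (e a) ⊓ 𝓟 (range e) :=
    le_inf (tendsto_nhdsWithin_of_tendsto_nhds_of_eventually_within _
        (he.tendsto a |>.mono_left nhdsWithin_le_nhds)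
        (eventually_nhdsWithin_of_forall fun b hb => hinj.ne hb))
      (le_principal_iff.2 (mem_map.2 (univ_mem' fun b => mem_range_self b)))
  exact neBot_of_le hmap

theorem MeasurableSet.exists_nat_bool_injection_of_not_countable {X : Type*}
    [TopologicalSpace X] [PolishSpace X] [MeasurableSpace X] [BorelSpace X] {S : Set X}
    (hS : MeasurableSet S) (hunc : ¬S.Countable) :
    ∃ f : (ℕ → Bool) → X, range f ⊆ S ∧ Continuous f ∧ Injective f := by
  obtain ⟨t', hle, hpol, hclosed, -⟩ := hS.isClopenable
  obtain ⟨f, hfS, hfc, hfi⟩ :=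
    @IsClosed.exists_nat_bool_injection_of_not_countable X t' hpol S hclosed hunc
  exact ⟨f, hfS, continuous_le_rng hle hfc, hfi⟩

namespace IsBernsteinSet

variable {X : Type*} [TopologicalSpace X] {B : Set X}

theorem compl (hB : IsBernsteinSet B) : IsBernsteinSet Bᶜ := fun P hP hne =>
  ⟨(hB P hP hne).2, by simpa using (hB P hP hne).1⟩

variable [PolishSpace X] [MeasurableSpace X] [BorelSpace X]

theorem countable_of_measurableSet_subset (hB : IsBernsteinSet B) {S : Set X}
    (hS : MeasurableSet S) (hSB : S ⊆ B) : S.Countable := by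
  by_contra hunc
  obtain ⟨f, hfS, hf, hfi⟩ := hS.exists_nat_bool_injection_of_not_countable hunc
  exact (hB _ (perfect_range_of_continuous_injective hf hfi) (range_nonempty f)).1
    (hfS.trans hSB)

theorem not_measurableSet (hX : ¬Countable X) (hB : IsBernsteinSet B) : ¬MeasurableSet B :=
  fun hmeas => hX <| countable_univ_iff.1 <| by
    simpa using (hB.countable_of_measurableSet_subset hmeas subset_rfl).union
      (hB.compl.countable_of_measurableSet_subset hmeas.compl subset_rfl)

theorem countable_range {Y : Type*} [TopologicalSpace Y] [CompactSpace Y] (hB : IsBernsteinSet B)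
    {g : Y → X} (hg : Continuous g) (hgB : (g ⁻¹' B).Countable) : (range g).Countable := by
  have hin : (range g ∩ B).Countable :=
    (hgB.image g).mono <| by
      rintro _ ⟨⟨y, rfl⟩, hyB⟩
      exact mem_image_of_mem g hyB
  have hout : (range g \ (range g ∩ B)).Countable :=
    hB.compl.countable_of_measurableSet_subset
      ((isCompact_range hg).isClosed.measurableSet.diff hin.measurableSet)
      fun _ hx hxB => hx.2 ⟨hx.1, hxB⟩
  simpa using hin.union hout

end IsBernsteinSet

theorem Continuous.exists_nonempty_interior_preimage_singleton {Y X : Type*}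
    [TopologicalSpace Y] [BaireSpace Y] [Nonempty Y] [TopologicalSpace X] [T1Space X] {g : Y → X}
    (hg : Continuous g) (hc : (range g).Countable) : ∃ x, (interior (g ⁻¹' {x})).Nonempty := by
  have := hc.to_subtype
  obtain ⟨x, hx⟩ := nonempty_interior_of_iUnion_of_closed
    (f := fun x : range g => g ⁻¹' {(x : X)}) (fun _ => isClosed_singleton.preimage hg)
    (eq_univ_of_forall fun y => mem_iUnion.2 ⟨⟨g y, mem_range_self y⟩, rfl⟩)
  exact ⟨x, hx⟩

theorem not_dense_preimage_and_dense_compl {Y X : Type*} [TopologicalSpace Y] [BaireSpace Y]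
    [Nonempty Y] [TopologicalSpace X] [T1Space X] {g : Y → X} (hg : Continuous g)
    (hc : (range g).Countable) (B : Set X) : ¬(Dense (g ⁻¹' B) ∧ Dense (g ⁻¹' B)ᶜ) := by
  rintro ⟨hin, hout⟩
  obtain ⟨x, hx⟩ := hg.exists_nonempty_interior_preimage_singleton hc
  obtain ⟨y₁, hy₁, hy₁B⟩ := hin.inter_open_nonempty _ isOpen_interior hx
  obtain ⟨y₂, hy₂, hy₂B⟩ := hout.inter_open_nonempty _ isOpen_interior hx
  have h₁ : g y₁ = x := interior_subset (s := g ⁻¹' {x}) hy₁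
  have h₂ : g y₂ = x := interior_subset (s := g ⁻¹' {x}) hy₂
  exact hy₂B (by rwa [mem_preimage, h₂, ← h₁])

theorem continuous_comp_initSeg {α β : Type*} [TopologicalSpace α] [DiscreteTopology α]
    [TopologicalSpace β] (n : ℕ) (φ : List α → β) :
    Continuous fun x : ℕ → α => φ (initSeg x n) :=
  (continuous_of_discreteTopology (f := fun c : Fin n → α => φ (List.ofFn c))).comp
    (continuous_pi fun i => continuous_apply (i : ℕ))

theorem continuous_playI_comp {α M A : Type*} [TopologicalSpace α] [DiscreteTopology α]
    [TopologicalSpace A] (σ : List M → A) (v : α → M) :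
    Continuous fun b : ℕ → α => playI σ (v ∘ b) := by
  refine continuous_pi fun n => ?_
  have h : ∀ b : ℕ → α, σ ((initSeg b n).map v) = playI σ (v ∘ b) n := fun b => by
    simp [playI, initSeg, List.map_ofFn, comp_def]
  exact (continuous_comp_initSeg n (σ ∘ List.map v)).congr h

section Branches

variable {A : Type*} [TopologicalSpace A] {T : Set (List A)}

theorem isClosed_setOf_forall_initSeg_mem [DiscreteTopology A] (T : Set (List A)) :
    IsClosed {x : ℕ → A | ∀ n, initSeg x n ∈ T} := by
  simp only [ofPred_forall]
  refine isClosed_iInter fun n => ?_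
  exact (isClosed_discrete {c : Fin n → A | List.ofFn c ∈ T}).preimage
    (f := fun (x : ℕ → A) (i : Fin n) => x i)
    (continuous_pi fun i : Fin n => continuous_apply (i : ℕ))

instance [DiscreteTopology A] [Countable A] : PolishSpace (Branches T) :=
  -- instance search does not reach `PolishSpace (ℕ → A)` without this intermediate step
  have : PolishSpace A := inferInstance
  (isClosed_setOf_forall_initSeg_mem T).polishSpace

theorem PlayerIWinsGamma.exists_continuous_preimage_eq {B : Set (Branches T)}
    (h : PlayerIWinsGamma (B.indicator fun _ => (1 : ℝ))) :
    ∃ g : (ℕ → Bool) → Branches T, Continuous g ∧ g ⁻¹' B = eventuallyFalse := by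
  obtain ⟨σ, hσ⟩ := h
  choose hlegal hwin using hσ
  let v : Bool → ℝ := fun c => c.toNat
  let g : (ℕ → Bool) → Branches T := fun b => ⟨playI σ (v ∘ b), hlegal _⟩
  refine ⟨g, (continuous_playI_comp σ v).subtype_mk _, ext fun b => ?_⟩
  have hne : ((B.indicator (fun _ => (1 : ℝ)) (g b) : ℝ) : EReal)
      ≠ limsup (fun t => (((b t).toNat : ℝ) : EReal)) atTop := hwin (v ∘ b)
  rw [limsup_toNat_eq_indicator, Ne, EReal.coe_eq_coe_iff] at hne
  by_cases hB : g b ∈ B <;> by_cases hb : b ∈ eventuallyFalse <;> simp [hB, hb] at hne ⊢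

theorem PlayerIIWinsGamma.measurable [DiscreteTopology A] [MeasurableSpace (Branches T)]
    [OpensMeasurableSpace (Branches T)] {f : Branches T → ℝ} (h : PlayerIIWinsGamma f) :
    Measurable f := by
  obtain ⟨τ, hτ⟩ := h
  have hlimsup : Measurable fun x => (f x : EReal) := by
    simp_rw [hτ]
    exact Measurable.limsup fun t => (continuous_coe_real_ereal.comp
      ((continuous_comp_initSeg (t + 1) τ).comp continuous_subtype_val)).measurable
  simpa only [comp_def, EReal.toReal_coe] using measurable_ereal_toReal.comp hlimsup

end Branches

theorem gamma_indicator_bernstein_not_determined_general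
    {A : Type*} [Countable A] [TopologicalSpace A] [DiscreteTopology A]
    {T : Set (List A)}
    (hX : ¬ Countable (Branches T)) (B : Set (Branches T)) (hB : IsBernsteinSet B) :
    ¬ PlayerIWinsGamma (B.indicator fun _ => (1 : ℝ)) ∧
    ¬ PlayerIIWinsGamma (B.indicator fun _ => (1 : ℝ)) := by
  borelize (Branches T)
  refine ⟨fun hI => ?_, fun hII => ?_⟩
  · obtain ⟨g, hg, hgB⟩ := hI.exists_continuous_preimage_eq
    refine not_dense_preimage_and_dense_compl hg
      (hB.countable_range hg (hgB ▸ countable_eventuallyFalse)) B ?_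
    rw [hgB]
    exact ⟨dense_setOf_eventually_eq false, dense_compl_eventuallyFalse⟩
  · exact hB.not_measurableSet hX ((measurable_indicator_const_iff 1).1 hII.measurable)

/-- If `X` is uncountable and `B ⊆ X` is a Bernstein set, then the game `Γ(1_B)` is not
determined: neither player has a winning strategy. -/
theorem gamma_indicator_bernstein_not_determined
    {A : Type*} [Countable A] [Nonempty A] [TopologicalSpace A] [DiscreteTopology A]
    {T : Set (List A)} (hT : IsPrunedTree T)
    (hX : ¬ Countable (Branches T)) (B : Set (Branches T)) (hB : IsBernsteinSet B) :
    ¬ PlayerIWinsGamma (B.indicator fun _ => (1 : ℝ)) ∧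
    ¬ PlayerIIWinsGamma (B.indicator fun _ => (1 : ℝ)) :=
  gamma_indicator_bernstein_not_determined_general hX B hB
end

section
/- Let T be a pruned tree on a non-empty countable set A and let X be the set of infinite branches of T with its cylinder-set topology. Let f : X → ℝ be arbitrary and suppose that there is a number r ∈ ℝ and a Cantor set C ⊆ X such that, in the subspace topology of C, the set C ∩ {x ∈ X : f(x) ≥ r} is meagre in C and dense in C. Then Player I has a winning strategy in the game Γ(f). -/
open Filter Topology

/-!
Since `C ∩ {f ≥ r}` is meagre in `C`, there are dense open sets `U₀, U₁, …` of `C` whose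
intersection misses `{f ≥ r}`. Player I keeps a point `y ∈ C` extending what he has played so
far, together with a level `k`, and always plays the next coordinate of `y`. While Player II
plays at most `r - 1/(k+1)`, Player I moves `y` into the dense set `{f ≥ r}`, inside the cylinder
already played. After a move above `r - 1/(k+1)` he moves `y` into `U_k`, waits until a whole
cylinder around `y` lies in `U_k` (which happens since `U_k` is open), and passes to level `k+1`.

If the level grows without bound, the branch `x` played lies in every `U_k`, so `f x < r`,
while Player II played above `r - 1/(k+1)` at arbitrarily late times for every `k`, so the limsup
is at least `r`. Otherwise the level stabilises at some `k`, from some time on Player II always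
plays at most `r - 1/(k+1)`, and `y` settles at a point with `f y ≥ r`, which is the branch
played.
-/

open Set

theorem initSeg_eq_initSeg_iff {β : Type*} {x y : ℕ → β} {n : ℕ} :
    initSeg x n = initSeg y n ↔ x ∈ PiNat.cylinder y n := by
  simp only [initSeg, List.ofFn_inj, funext_iff, PiNat.mem_cylinder_iff]
  exact ⟨fun h i hi => h ⟨i, hi⟩, fun h i => h i i.isLt⟩

theorem exists_le_lt_succ_of_lt {u : ℕ → ℕ} {L n : ℕ} (h₀ : u 0 ≤ L) (hn : L < u n) :
    ∃ t, u t ≤ L ∧ L < u (t + 1) := by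
  induction n with
  | zero => omega
  | succ n ih => exact if h : u n ≤ L then ⟨n, h, hn⟩ else ih (by omega)

theorem exists_seq_isOpen_dense_of_mem_residual {X : Type*} [TopologicalSpace X] {s : Set X}
    (hs : s ∈ residual X) :
    ∃ U : ℕ → Set X, (∀ n, IsOpen (U n)) ∧ (∀ n, Dense (U n)) ∧ ⋂ n, U n ⊆ s := by
  obtain ⟨S, hSo, hSd, hSc, hSs⟩ := mem_residual_iff.1 hs
  obtain ⟨U, hU⟩ := (hSc.insert univ).exists_eq_range (insert_nonempty _ _)
  have hUS : ∀ n, U n = univ ∨ U n ∈ S := fun n =>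
    mem_insert_iff.1 (hU ▸ mem_range_self n)
  refine ⟨U, fun n => ?_, fun n => ?_, fun x hx => hSs fun t ht => ?_⟩
  · rcases hUS n with h | h <;> simp [h, hSo]
  · rcases hUS n with h | h <;> simp [h, hSd]
  · obtain ⟨n, rfl⟩ : t ∈ range U := hU ▸ mem_insert_of_mem _ ht
    exact mem_iInter.1 hx n

namespace PiNat

variable {E : ℕ → Type*}

theorem mem_cylinder_of_forall_succ {y : ℕ → ∀ n, E n}
    (hy : ∀ t, y (t + 1) ∈ cylinder (y t) (t + 1)) {n m : ℕ} (hnm : n ≤ m) :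
    y m ∈ cylinder (y n) n := by
  induction m, hnm using Nat.le_induction with
  | base => exact self_mem_cylinder _ _
  | succ m hnm ih =>
    rw [mem_cylinder_iff_eq] at ih ⊢
    rw [← ih, ← mem_cylinder_iff_eq]
    exact cylinder_anti _ (by omega) (hy m)

theorem diag_mem_cylinder {y : ℕ → ∀ n, E n}
    (hy : ∀ t, y (t + 1) ∈ cylinder (y t) (t + 1)) (n : ℕ) :
    (fun i => y i i) ∈ cylinder (y n) n := fun i hi =>
  calc y i i = y (i + 1) i := (hy i i (Nat.lt_succ_self i)).symm
    _ = y n i := (mem_cylinder_of_forall_succ hy hi i (Nat.lt_succ_self i)).symm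

variable [∀ n, TopologicalSpace (E n)] [∀ n, DiscreteTopology (E n)]

theorem hasBasis_nhds_cylinder (x : ∀ n, E n) :
    (𝓝 x).HasBasis (fun _ : ℕ => True) (cylinder x) := by
  refine ⟨fun V => ⟨fun hV => ?_, fun ⟨n, _, h⟩ =>
    mem_of_superset ((isOpen_cylinder E x n).mem_nhds (self_mem_cylinder x n)) h⟩⟩
  obtain ⟨_, ⟨c, n, rfl⟩, hx, hV⟩ := (isTopologicalBasis_cylinders E).mem_nhds_iff.1 hV
  exact ⟨n, trivial, mem_cylinder_iff_eq.1 hx ▸ hV⟩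

theorem tendsto_of_mem_cylinder {y : ℕ → ∀ n, E n} {x : ∀ n, E n}
    (hy : ∀ n, y n ∈ cylinder x n) : Tendsto y atTop (𝓝 x) :=
  (hasBasis_nhds_cylinder x).tendsto_right_iff.2 fun n _ =>
    eventually_atTop.2 ⟨n, fun t ht => cylinder_anti x ht (hy t)⟩

end PiNat

section Branches

variable {A : Type*} {T : Set (List A)} {C : Set (Branches T)}

def relCylinder (z : C) (n : ℕ) : Set C :=
  {w | w.1.1 ∈ PiNat.cylinder z.1.1 n}

theorem self_mem_relCylinder (z : C) (n : ℕ) : z ∈ relCylinder z n :=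
  PiNat.self_mem_cylinder _ _

theorem relCylinder_anti (z : C) {m n : ℕ} (h : m ≤ n) : relCylinder z n ⊆ relCylinder z m :=
  fun _ hw => PiNat.cylinder_anti _ h hw

theorem relCylinder_eq_of_mem {z w : C} {n : ℕ} (h : w ∈ relCylinder z n) :
    relCylinder w n = relCylinder z n := by
  simp only [relCylinder, PiNat.mem_cylinder_iff_eq.1 h]

theorem eq_of_eventually_mem_relCylinder {z w : C} (h : ∀ᶠ n in atTop, z ∈ relCylinder w n) :
    z = w := by
  obtain ⟨N, hN⟩ := eventually_atTop.1 h
  refine Subtype.ext (Subtype.ext (funext fun i => ?_))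
  exact hN (max N (i + 1)) (le_max_left _ _) i (by omega)

variable [TopologicalSpace A] [DiscreteTopology A]

theorem isOpen_relCylinder (z : C) (n : ℕ) : IsOpen (relCylinder z n) :=
  (PiNat.isOpen_cylinder _ _ n).preimage (continuous_subtype_val.comp continuous_subtype_val)

theorem hasBasis_nhds_relCylinder (z : C) :
    (𝓝 z).HasBasis (fun _ : ℕ => True) (relCylinder z) := by
  rw [(IsInducing.subtypeVal.comp (IsInducing.subtypeVal (t := C))).nhds_eq_comap z]
  exact (PiNat.hasBasis_nhds_cylinder _).comap _

theorem exists_eq_diag_of_mem_relCylinder (hC : IsClosed C) {y : ℕ → C}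
    (hy : ∀ t, y (t + 1) ∈ relCylinder (y t) (t + 1)) :
    ∃ z : C, z.1.1 = (fun i => (y i).1.1 i) ∧ ∀ n, z ∈ relCylinder (y n) n := by
  have hdiag := PiNat.diag_mem_cylinder (y := fun t => (y t).1.1) hy
  let x : Branches T :=
    ⟨fun i => (y i).1.1 i, fun n => (initSeg_eq_initSeg_iff.2 (hdiag n)).symm ▸ (y n).1.2 n⟩
  have hx : Tendsto (fun t => (y t).1) atTop (𝓝 x) :=
    IsInducing.subtypeVal.tendsto_nhds_iff.2 <| PiNat.tendsto_of_mem_cylinder fun n =>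
      (PiNat.mem_cylinder_comm _ _ _).1 (hdiag n)
  exact ⟨⟨x, hC.mem_of_tendsto hx (Eventually.of_forall fun t => (y t).2)⟩, rfl, hdiag⟩

end Branches

def runStates {M S : Type*} (step : ℕ → M → S → S) (s₀ : S) (v : ℕ → M) : ℕ → S
  | 0 => s₀
  | t + 1 => step t (v t) (runStates step s₀ v t)

theorem runStates_congr {M S : Type*} (step : ℕ → M → S → S) (s₀ : S) {v w : ℕ → M}
    {n : ℕ} (h : ∀ i < n, v i = w i) : runStates step s₀ v n = runStates step s₀ w n := by
  induction n with
  | zero => rfl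
  | succ n ih =>
    simp only [runStates, h n (Nat.lt_succ_self n), ih fun i hi => h i (by omega)]

namespace MeagreGame

variable {A : Type*} {T : Set (List A)} {C : Set (Branches T)}

open Classical in
noncomputable def moveInto (s : Set C) (y : C) (n : ℕ) : C :=
  if y ∈ s then y else if h : (relCylinder y n ∩ s).Nonempty then h.some else y

theorem moveInto_of_mem {s : Set C} {y : C} (h : y ∈ s) (n : ℕ) : moveInto s y n = y :=
  if_pos h

theorem moveInto_mem_relCylinder (s : Set C) (y : C) (n : ℕ) :
    moveInto s y n ∈ relCylinder y n := by
  unfold moveInto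
  split_ifs with _ h₂
  · exact self_mem_relCylinder y n
  · exact h₂.some_mem.1
  · exact self_mem_relCylinder y n

theorem moveInto_mem [TopologicalSpace A] [DiscreteTopology A] {s : Set C} (hs : Dense s)
    (y : C) (n : ℕ) : moveInto s y n ∈ s := by
  unfold moveInto
  split_ifs with h₁ h₂
  · exact h₁
  · exact h₂.some_mem.2
  · exact (h₂ <| hs.inter_open_nonempty _ (isOpen_relCylinder y n)
      ⟨y, self_mem_relCylinder y n⟩).elim

structure State (C : Set (Branches T)) where
  point : C
  level : ℕ
  pending : Bool

variable (f : Branches T → ℝ) (r : ℝ) (U : ℕ → Set C)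

-- At time `t` Player I has played the coordinates `0, …, t` of `S.point`, and `w` is Player II's
-- answer; every move therefore stays in `relCylinder S.point (t + 1)`.
open Classical in
noncomputable def step (t : ℕ) (w : ℝ) (S : State C) : State C :=
  if S.pending then
    if relCylinder S.point (t + 1) ⊆ U S.level then ⟨S.point, S.level + 1, false⟩ else S
  else if r - 1 / (S.level + 1 : ℝ) < w then
    ⟨moveInto (U S.level) S.point (t + 1), S.level, true⟩
  else ⟨moveInto {z | r ≤ f z} S.point (t + 1), S.level, false⟩

noncomputable def run (y₀ : C) (v : ℕ → ℝ) : ℕ → State C :=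
  runStates (step f r U) ⟨y₀, 0, false⟩ v

noncomputable def strategy (y₀ : C) (l : List ℝ) : A :=
  (run f r U y₀ (fun i => l.getD i 0) l.length).point.1.1 l.length

theorem playI_strategy (y₀ : C) (v : ℕ → ℝ) :
    playI (strategy f r U y₀) v = fun n => (run f r U y₀ v n).point.1.1 n := by
  funext n
  have hlen : (initSeg v n).length = n := List.length_ofFn
  simp only [playI, strategy, hlen]
  rw [run, run, runStates_congr _ _ fun i hi => ?_]
  simp [initSeg, hi]

variable {f r U} {y₀ : C} {v : ℕ → ℝ}

local notation "𝓡" => run f r U y₀ v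

theorem run_succ (t : ℕ) : 𝓡 (t + 1) = step f r U t (v t) (𝓡 t) := rfl

theorem point_run_succ_mem (t : ℕ) :
    (𝓡 (t + 1)).point ∈ relCylinder (𝓡 t).point (t + 1) := by
  rw [run_succ]
  unfold step
  split_ifs
  · exact self_mem_relCylinder _ _
  · exact self_mem_relCylinder _ _
  · exact moveInto_mem_relCylinder _ _ _
  · exact moveInto_mem_relCylinder _ _ _

theorem level_run_succ_eq_or (t : ℕ) :
    (𝓡 (t + 1)).level = (𝓡 t).level ∨
      (𝓡 t).pending ∧ relCylinder (𝓡 t).point (t + 1) ⊆ U (𝓡 t).level ∧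
        𝓡 (t + 1) = ⟨(𝓡 t).point, (𝓡 t).level + 1, false⟩ := by
  rw [run_succ]
  unfold step
  split_ifs <;> simp_all

theorem monotone_level : Monotone fun t => (𝓡 t).level :=
  monotone_nat_of_le_succ fun t => (level_run_succ_eq_or t).elim (fun h => h.ge)
    fun ⟨_, _, h⟩ => h ▸ Nat.le_succ _

theorem relCylinder_subset_of_lt_level (t : ℕ) :
    ∀ i < (𝓡 t).level, relCylinder (𝓡 t).point t ⊆ U i := by
  induction t with
  | zero => simp [run, runStates]
  | succ t ih =>
    have hcyl : relCylinder (𝓡 (t + 1)).point (t + 1) ⊆ relCylinder (𝓡 t).point t := by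
      rw [relCylinder_eq_of_mem (point_run_succ_mem t)]
      exact relCylinder_anti _ (Nat.le_succ t)
    intro i hi
    rcases level_run_succ_eq_or t with h | ⟨-, hsub, h⟩
    · exact hcyl.trans (ih i (h ▸ hi))
    · rw [h] at hi ⊢
      rcases Nat.lt_succ_iff_lt_or_eq.1 hi with hi | rfl
      · exact (relCylinder_anti _ (Nat.le_succ t)).trans (ih i hi)
      · exact hsub

theorem exists_lt_of_pending (t : ℕ) : (𝓡 t).pending →
    ∃ s < t, (𝓡 s).level = (𝓡 t).level ∧ r - 1 / ((𝓡 t).level + 1 : ℝ) < v s := by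
  induction t with
  | zero => simp [run, runStates]
  | succ t ih =>
    rw [run_succ]
    unfold step
    split_ifs with h₁ _ h₃
    · simp
    · obtain ⟨s, hs, h⟩ := ih h₁
      exact fun _ => ⟨s, by omega, h⟩
    · exact fun _ => ⟨t, by omega, rfl, h₃⟩
    · simp

theorem run_succ_of_pending_of_subset {t : ℕ} (hp : (𝓡 t).pending)
    (h : relCylinder (𝓡 t).point (t + 1) ⊆ U (𝓡 t).level) :
    𝓡 (t + 1) = ⟨(𝓡 t).point, (𝓡 t).level + 1, false⟩ := by
  simp [run_succ, step, hp, h]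

theorem run_succ_of_pending_of_not_subset {t : ℕ} (hp : (𝓡 t).pending)
    (h : ¬relCylinder (𝓡 t).point (t + 1) ⊆ U (𝓡 t).level) : 𝓡 (t + 1) = 𝓡 t := by
  simp [run_succ, step, hp, h]

theorem run_succ_of_not_pending {t : ℕ} (hp : (𝓡 t).pending = false)
    (hp' : (𝓡 (t + 1)).pending = false) :
    v t ≤ r - 1 / ((𝓡 t).level + 1 : ℝ) ∧
      𝓡 (t + 1) =
        ⟨moveInto {z | r ≤ f z} (𝓡 t).point (t + 1), (𝓡 t).level, false⟩ := by
  rw [run_succ] at hp' ⊢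
  unfold step at hp' ⊢
  split_ifs at hp' ⊢ with h <;> simp_all

theorem frequently_lt_of_forall_lt_level (h : ∀ L, ∃ t, L < (𝓡 t).level) (m : ℕ) :
    ∃ᶠ s in atTop, r - 1 / (m + 1 : ℝ) < v s := by
  refine frequently_atTop.2 fun N => ?_
  set L := max m ((𝓡 N).level + 1)
  obtain ⟨n, hn⟩ := h L
  obtain ⟨t, hle, hlt⟩ := exists_le_lt_succ_of_lt (u := fun t => (𝓡 t).level)
    (Nat.zero_le L) hn
  obtain ⟨hp, -, hinc⟩ := (level_run_succ_eq_or t).resolve_left (hle.trans_lt hlt).ne'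
  have hL : (𝓡 t).level = L := by
    rw [hinc] at hlt
    dsimp only at hlt
    omega
  obtain ⟨s, -, hs, hv⟩ := exists_lt_of_pending t hp
  refine ⟨s, le_of_not_gt fun hsN => ?_, ?_⟩
  · have : (𝓡 s).level ≤ (𝓡 N).level := monotone_level hsN.le
    omega
  · calc r - 1 / (m + 1 : ℝ) ≤ r - 1 / (L + 1 : ℝ) := by
          gcongr
          exact_mod_cast le_max_left _ _
      _ < v s := by rw [← hL]; exact hv

variable [TopologicalSpace A] [DiscreteTopology A]

theorem point_mem_of_pending (hU : ∀ k, Dense (U k)) (t : ℕ) :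
    (𝓡 t).pending → (𝓡 t).point ∈ U (𝓡 t).level := by
  induction t with
  | zero => simp [run, runStates]
  | succ t ih =>
    rw [run_succ]
    unfold step
    split_ifs <;> simp_all [moveInto_mem]

theorem not_pending_of_level_eq (hUo : ∀ k, IsOpen (U k)) (hUd : ∀ k, Dense (U k))
    {t₀ K : ℕ} (hK : ∀ t ≥ t₀, (𝓡 t).level = K) {t : ℕ} (ht : t₀ ≤ t) :
    (𝓡 t).pending = false := by
  by_contra hp
  rw [Bool.not_eq_false] at hp
  have hconst : ∀ u ≥ t, 𝓡 u = 𝓡 t := by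
    intro u hu
    induction u, hu using Nat.le_induction with
    | base => rfl
    | succ u hu ih =>
      have hpu : (𝓡 u).pending := ih ▸ hp
      by_cases hsub : relCylinder (𝓡 u).point (u + 1) ⊆ U (𝓡 u).level
      · have h₁ := hK (u + 1) (by omega)
        simp [run_succ_of_pending_of_subset hpu hsub, hK u (by omega)] at h₁
      · rw [run_succ_of_pending_of_not_subset hpu hsub, ih]
  obtain ⟨n, -, hn⟩ := (hasBasis_nhds_relCylinder _).mem_iff.1
    ((hUo _).mem_nhds (point_mem_of_pending hUd t hp))
  set u := max t n
  have hu : 𝓡 u = 𝓡 t := hconst u (le_max_left _ _)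
  have hsub : relCylinder (𝓡 u).point (u + 1) ⊆ U (𝓡 u).level := by
    rw [hu]
    exact (relCylinder_anti _ (by omega)).trans hn
  have h₁ := hK (u + 1) (by omega)
  simp [run_succ_of_pending_of_subset (hu ▸ hp) hsub, hK u (by omega)] at h₁

theorem exists_eventually_point_eq (hUo : ∀ k, IsOpen (U k)) (hUd : ∀ k, Dense (U k))
    (hdense : Dense {z : C | r ≤ f z}) {L : ℕ} (hL : ∀ t, (𝓡 t).level ≤ L) :
    ∃ (y : C) (K t₁ : ℕ), r ≤ f y ∧
      ∀ t ≥ t₁, (𝓡 t).point = y ∧ v t ≤ r - 1 / (K + 1 : ℝ) := by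
  have hbdd : BddAbove (range fun t => (𝓡 t).level) := ⟨L, forall_mem_range.2 hL⟩
  obtain ⟨t₀, ht₀⟩ := Nat.sSup_mem (range_nonempty _) hbdd
  have hK : ∀ t ≥ t₀, (𝓡 t).level = (𝓡 t₀).level := fun t ht =>
    le_antisymm ((le_csSup hbdd (mem_range_self t)).trans_eq ht₀.symm) (monotone_level ht)
  have hmove : ∀ t ≥ t₀, v t ≤ r - 1 / ((𝓡 t₀).level + 1 : ℝ) ∧
      (𝓡 (t + 1)).point = moveInto {z | r ≤ f z} (𝓡 t).point (t + 1) :=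
    fun t ht => by
      obtain ⟨hv, h⟩ := run_succ_of_not_pending (not_pending_of_level_eq hUo hUd hK ht)
        (not_pending_of_level_eq hUo hUd hK (Nat.le_succ_of_le ht))
      exact ⟨hK t ht ▸ hv, by rw [h]⟩
  obtain ⟨y, hy⟩ : ∃ y, (𝓡 (t₀ + 1)).point = y := ⟨_, rfl⟩
  have hfy : r ≤ f y := by
    rw [← hy, (hmove t₀ le_rfl).2]
    exact moveInto_mem hdense _ _
  have hconst : ∀ t ≥ t₀ + 1, (𝓡 t).point = y := by
    intro t ht
    induction t, ht using Nat.le_induction with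
    | base => exact hy
    | succ t ht ih => rw [(hmove t (by omega)).2, ih, moveInto_of_mem hfy]
  exact ⟨y, _, t₀ + 1, hfy, fun t ht => ⟨hconst t ht, (hmove t (by omega)).1⟩⟩

theorem f_ne_limsup (hUo : ∀ k, IsOpen (U k)) (hUd : ∀ k, Dense (U k))
    (hUf : ⋂ k, U k ⊆ {z | r ≤ f z}ᶜ) (hdense : Dense {z : C | r ≤ f z}) {z : C}
    (hz : ∀ n, z ∈ relCylinder (𝓡 n).point n) :
    (f z : EReal) ≠ limsup (fun t => (v t : EReal)) atTop := by
  by_cases hunb : ∀ L, ∃ t, L < (𝓡 t).level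
  · have hfz : f z < r := by
      have hzU : z ∈ ⋂ k, U k := mem_iInter.2 fun k => by
        obtain ⟨t, ht⟩ := hunb k
        exact relCylinder_subset_of_lt_level t k ht (hz t)
      simpa using hUf hzU
    obtain ⟨m, hm⟩ := exists_nat_one_div_lt (sub_pos.2 hfz)
    have hlim : ((r - 1 / (m + 1 : ℝ) : ℝ) : EReal) ≤ limsup (fun t => (v t : EReal)) atTop :=
      le_limsup_of_frequently_le ((frequently_lt_of_forall_lt_level hunb m).mono
        fun s hs => EReal.coe_le_coe_iff.2 hs.le) (by isBoundedDefault)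
    exact (lt_of_lt_of_le (EReal.coe_lt_coe_iff.2 (by linarith)) hlim).ne
  · push Not at hunb
    obtain ⟨L, hL⟩ := hunb
    obtain ⟨y, K, t₁, hy, h⟩ := exists_eventually_point_eq hUo hUd hdense hL
    have hzy : z = y := eq_of_eventually_mem_relCylinder <|
      eventually_atTop.2 ⟨t₁, fun t ht => (h t ht).1 ▸ hz t⟩
    have hlim : limsup (fun t => (v t : EReal)) atTop ≤ ((r - 1 / (K + 1 : ℝ) : ℝ) : EReal) :=
      limsup_le_of_le (by isBoundedDefault)
        (eventually_atTop.2 ⟨t₁, fun t ht => EReal.coe_le_coe_iff.2 (h t ht).2⟩)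
    have hK : (0 : ℝ) < 1 / (K + 1) := by positivity
    exact (lt_of_le_of_lt hlim (EReal.coe_lt_coe_iff.2 (by rw [hzy]; linarith))).ne'

end MeagreGame

theorem playerIWinsGamma_of_isClosed {A : Type*} [TopologicalSpace A] [DiscreteTopology A]
    {T : Set (List A)} (f : Branches T → ℝ) (r : ℝ) {C : Set (Branches T)} (hC : IsClosed C)
    (hne : C.Nonempty) (hmeagre : IsMeagre {z : C | r ≤ f z})
    (hdense : Dense {z : C | r ≤ f z}) : PlayerIWinsGamma f := by
  obtain ⟨U, hUo, hUd, hUf⟩ := exists_seq_isOpen_dense_of_mem_residual hmeagre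
  obtain ⟨y₀, hy₀⟩ := hne
  refine ⟨MeagreGame.strategy f r U ⟨y₀, hy₀⟩, fun v => ?_⟩
  obtain ⟨z, hzx, hz⟩ := exists_eq_diag_of_mem_relCylinder hC
    (MeagreGame.point_run_succ_mem (f := f) (r := r) (U := U) (y₀ := ⟨y₀, hy₀⟩) (v := v))
  have hplay : playI (MeagreGame.strategy f r U ⟨y₀, hy₀⟩) v = z.1.1 := by
    rw [MeagreGame.playI_strategy, hzx]
  refine ⟨hplay ▸ z.1.2, ?_⟩
  convert MeagreGame.f_ne_limsup hUo hUd hUf hdense hz using 3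
  exact Subtype.ext hplay

theorem playerI_wins_of_meagre_dense_general
    {A : Type*} [TopologicalSpace A] [DiscreteTopology A]
    {T : Set (List A)} (f : Branches T → ℝ)
    (r : ℝ) (C : Set (Branches T)) (hC : IsCantorSet C)
    (hmeagre : IsMeagre (Subtype.val ⁻¹' {x | r ≤ f x} : Set ↥C))
    (hdense : Dense (Subtype.val ⁻¹' {x | r ≤ f x} : Set ↥C)) :
    PlayerIWinsGamma f := by
  obtain ⟨e⟩ := hC
  have : CompactSpace C := e.symm.compactSpace
  exact playerIWinsGamma_of_isClosed f r (isCompact_iff_compactSpace.2 this).isClosed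
    ⟨_, (e.symm fun _ => true).2⟩ hmeagre hdense

/-- If there are `r ∈ ℝ` and a Cantor set `C ⊆ X` such that, in the subspace topology of
`C`, the set `C ∩ {f ≥ r}` is meagre and dense, then Player I has a winning strategy in
`Γ(f)`. -/
theorem playerI_wins_of_meagre_dense
    {A : Type*} [Countable A] [Nonempty A] [TopologicalSpace A] [DiscreteTopology A]
    {T : Set (List A)} (hT : IsPrunedTree T) (f : Branches T → ℝ)
    (r : ℝ) (C : Set (Branches T)) (hC : IsCantorSet C)
    (hmeagre : IsMeagre (Subtype.val ⁻¹' {x | r ≤ f x} : Set ↥C))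
    (hdense : Dense (Subtype.val ⁻¹' {x | r ≤ f x} : Set ↥C)) :
    PlayerIWinsGamma f :=
  playerI_wins_of_meagre_dense_general f r C hC hmeagre hdense
end
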